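/- arXiv:2405.12917 — 8 statements merged into one kernel-verified Lean document; each statement's English description precedes it below -/
import Mathlib

section
/- Let C and D be categories with terminal objects, and let F : D → C be a functor such that the unique map F1 → 1 is an isomorphism, and such that for every morphism y : 1 → FX there is a unique x : 1 → X with y = Fx ∘ (F1 → 1)⁻¹. If T is the pointwise codensity monad of F (the pointwise right Kan extension of F along itself, with its induced monad structure), then the unit η₁ : 1 → T1 is an isomorphism. -/
open CategoryTheory Limits

universe v₁ v₂ u₁ u₂

/-!
`T1` is the limit of `F` over the points `g : 1 ⟶ FX`, with legs `T g ≫ ε_X`. Since every such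
point factors through the terminal object `F1`, naturality of `ε` shows that each leg is
`T1 ⟶ 1 --g--> FX`. Hence the legs cannot distinguish `𝟙` from `T1 ⟶ 1 --η₁--> T1`, and
`T1 ⟶ 1` is inverse to `η₁`.
-/

namespace CategoryTheory

variable {C : Type u₁} {D : Type u₂} [Category.{v₁} C] [Category.{v₂} D]
  [HasTerminal C] {F : D ⥤ C} {T : C ⥤ C}

lemma map_comp_app_eq_terminal_from_comp [HasTerminal D] (ε : F ⋙ T ⟶ F)
    [IsIso (terminal.from (F.obj (⊤_ D)))] {X : D} (x : ⊤_ D ⟶ X) :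
    T.map (inv (terminal.from (F.obj (⊤_ D))) ≫ F.map x) ≫ ε.app X =
      terminal.from (T.obj (⊤_ C)) ≫ inv (terminal.from (F.obj (⊤_ D))) ≫ F.map x := by
  have hterminal : T.map (inv (terminal.from (F.obj (⊤_ D)))) ≫ ε.app (⊤_ D) =
      terminal.from (T.obj (⊤_ C)) ≫ inv (terminal.from (F.obj (⊤_ D))) :=
    (cancel_mono (terminal.from (F.obj (⊤_ D)))).mp (Subsingleton.elim _ _)
  rw [Functor.map_comp, Category.assoc, ← Functor.comp_map, ε.naturality x,
    reassoc_of% hterminal]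

lemma isIso_unit_app_terminal {ε : F ⋙ T ⟶ F}
    (hT : (Functor.RightExtension.mk T ε).IsPointwiseRightKanExtension)
    {η : 𝟭 C ⟶ T} (hη : ∀ X : D, η.app (F.obj X) ≫ ε.app X = 𝟙 (F.obj X))
    (hlegs : ∀ (X : D) (g : ⊤_ C ⟶ F.obj X),
      T.map g ≫ ε.app X = terminal.from (T.obj (⊤_ C)) ≫ g) :
    IsIso (η.app (⊤_ C)) := by
  refine ⟨terminal.from _, terminal.hom_ext _ _, (hT (⊤_ C)).hom_ext fun j => ?_⟩
  calc (terminal.from _ ≫ η.app (⊤_ C)) ≫ T.map j.hom ≫ ε.app j.right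
      = terminal.from _ ≫ j.hom ≫ η.app (F.obj j.right) ≫ ε.app j.right := by
        simp only [Category.assoc, ← η.naturality_assoc, Functor.id_map]
    _ = 𝟙 _ ≫ T.map j.hom ≫ ε.app j.right := by
        rw [hη, Category.comp_id, Category.id_comp, hlegs]

end CategoryTheory

/-- If `F : D ⥤ C` is such that `F1 → 1` is an isomorphism and every point `1 ⟶ FX`
comes from a unique point `1 ⟶ X`, then the pointwise codensity monad of `F`
has invertible unit at the terminal object (i.e. it is affine). -/
theorem affine_of_pointwise_codensity
    {C : Type u₁} {D : Type u₂} [Category.{v₁} C] [Category.{v₂} D]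
    [HasTerminal C] [HasTerminal D] (F : D ⥤ C)
    (h1 : IsIso (terminal.from (F.obj (⊤_ D))))
    (h2 : ∀ (X : D) (y : ⊤_ C ⟶ F.obj X),
      ∃! x : ⊤_ D ⟶ X, y = inv (terminal.from (F.obj (⊤_ D))) ≫ F.map x)
    -- `(T, ε)` is the pointwise right Kan extension of `F` along itself
    (T : C ⥤ C) (ε : F ⋙ T ⟶ F)
    (hT : (Functor.RightExtension.mk T ε).IsPointwiseRightKanExtension)
    -- `η` is the unit of the induced (codensity) monad structure on `T`
    (η : 𝟭 C ⟶ T)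
    (hη : ∀ X : D, η.app (F.obj X) ≫ ε.app X = 𝟙 (F.obj X)) :
    IsIso (η.app (⊤_ C)) := by
  refine isIso_unit_app_terminal hT hη fun X g => ?_
  obtain ⟨x, rfl, -⟩ := h2 X g
  exact map_comp_app_eq_terminal_from_comp ε x
end

section
/- Let T be a monad on a category C, H : D → C a functor, and suppose (P, α) is a terminal object of the comma category (H_* ↓ TH), whose objects are pairs (S, β) of an endofunctor S on D and a natural transformation β : HS → TH, and morphisms (S, β) → (S', β') are natural transformations γ : S → S' with β' ∘ Hγ = β. Then P carries a unique monad structure making α : HP → TH a Kleisli law, i.e. satisfying α ∘ Hη^P = η^T_H and α ∘ Hμ^P = μ^T_H ∘ Tα ∘ α_P. -/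
/-!
Terminality makes `α` jointly monic: two transformations `S ⟶ P` agree as soon as their
composites with `α` agree. The unit and multiplication are the unique maps into `P` lying over
`η^T H` and `μ^T ∘ Tα ∘ αP`, and each monad law holds because both of its sides have the same
composite with `α`, by the Kleisli-law equations together with the monad laws of `T`.
-/

open CategoryTheory

universe v₁ v₂ u₁ u₂

section

variable {C : Type u₁} {D : Type u₂} [Category.{v₁} C] [Category.{v₂} D]

def IsTerminalOver {H K : D ⥤ C} {P : D ⥤ D} (α : P ⋙ H ⟶ K) : Prop :=
  ∀ (S : D ⥤ D) (β : S ⋙ H ⟶ K), ∃! γ : S ⟶ P, Functor.whiskerRight γ H ≫ α = β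

namespace IsTerminalOver

variable {H K : D ⥤ C} {P : D ⥤ D} {α : P ⋙ H ⟶ K}

theorem hom_ext (hα : IsTerminalOver α) {S : D ⥤ D} {γ γ' : S ⟶ P}
    (h : Functor.whiskerRight γ H ≫ α = Functor.whiskerRight γ' H ≫ α) : γ = γ' :=
  (hα S _).unique rfl h.symm

theorem eq_id (hα : IsTerminalOver α) {γ : P ⟶ P} (h : Functor.whiskerRight γ H ≫ α = α) :
    γ = 𝟙 P :=
  hα.hom_ext (by simpa using h)

end IsTerminalOver

variable (T : Monad C) (H : D ⥤ C) {P : D ⥤ D} (α : P ⋙ H ⟶ H ⋙ T.toFunctor)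

@[simps!]
def kleisliUnit : 𝟭 D ⋙ H ⟶ H ⋙ T.toFunctor :=
  H.rightUnitor.inv ≫ Functor.whiskerLeft H T.η

@[simps!]
def kleisliMul : (P ⋙ P) ⋙ H ⟶ H ⋙ T.toFunctor :=
  (Functor.associator P P H).hom ≫ Functor.whiskerLeft P α ≫
    (Functor.associator P H T.toFunctor).inv ≫ Functor.whiskerRight α T.toFunctor ≫
    (Functor.associator H T.toFunctor T.toFunctor).hom ≫ Functor.whiskerLeft H T.μ

variable {T H α}

theorem whiskerRight_comp_eq_kleisliUnit_iff {e : 𝟭 D ⟶ P} :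
    Functor.whiskerRight e H ≫ α = kleisliUnit T H ↔
      ∀ X, H.map (e.app X) ≫ α.app X = T.η.app (H.obj X) := by
  rw [NatTrans.ext_iff, funext_iff]
  simp only [NatTrans.comp_app, Functor.whiskerRight_app, kleisliUnit_app]

theorem whiskerRight_comp_eq_kleisliMul_iff {m : P ⋙ P ⟶ P} :
    Functor.whiskerRight m H ≫ α = kleisliMul T H α ↔
      ∀ X, H.map (m.app X) ≫ α.app X =
        α.app (P.obj X) ≫ T.map (α.app X) ≫ T.μ.app (H.obj X) := by
  rw [NatTrans.ext_iff, funext_iff]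
  simp only [NatTrans.comp_app, Functor.whiskerRight_app, kleisliMul_app]

namespace IsTerminalOver

variable {e : 𝟭 D ⟶ P} {m : P ⋙ P ⟶ P}

theorem left_unit (hα : IsTerminalOver α) (he : Functor.whiskerRight e H ≫ α = kleisliUnit T H)
    (hm : Functor.whiskerRight m H ≫ α = kleisliMul T H α) (X : D) :
    e.app (P.obj X) ≫ m.app X = 𝟙 (P.obj X) := by
  rw [whiskerRight_comp_eq_kleisliUnit_iff] at he
  rw [whiskerRight_comp_eq_kleisliMul_iff] at hm
  have : (Functor.whiskerLeft P e ≫ m : P ⟶ P) = 𝟙 P := hα.eq_id <| by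
    ext X
    simp only [NatTrans.comp_app, Functor.whiskerRight_app, Functor.whiskerLeft_app,
      Functor.map_comp, Category.assoc, hm]
    rw [reassoc_of% he, ← T.η.naturality_assoc]
    simp
  exact NatTrans.congr_app this X

theorem right_unit (hα : IsTerminalOver α) (he : Functor.whiskerRight e H ≫ α = kleisliUnit T H)
    (hm : Functor.whiskerRight m H ≫ α = kleisliMul T H α) (X : D) :
    P.map (e.app X) ≫ m.app X = 𝟙 (P.obj X) := by
  rw [whiskerRight_comp_eq_kleisliUnit_iff] at he
  rw [whiskerRight_comp_eq_kleisliMul_iff] at hm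
  have : (Functor.whiskerRight e P ≫ m : P ⟶ P) = 𝟙 P := hα.eq_id <| by
    ext X
    simp only [NatTrans.comp_app, Functor.whiskerRight_app, Functor.map_comp, Category.assoc, hm]
    rw [← Functor.comp_map, α.naturality_assoc]
    simp [← Functor.map_comp_assoc, he]
  exact NatTrans.congr_app this X

theorem assoc (hα : IsTerminalOver α) (hm : Functor.whiskerRight m H ≫ α = kleisliMul T H α)
    (X : D) : P.map (m.app X) ≫ m.app X = m.app (P.obj X) ≫ m.app X := by
  rw [whiskerRight_comp_eq_kleisliMul_iff] at hm
  have : (Functor.whiskerRight m P ≫ m : (P ⋙ P) ⋙ P ⟶ P) = Functor.whiskerLeft P m ≫ m :=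
    hα.hom_ext <| by
      ext X
      simp only [NatTrans.comp_app, Functor.whiskerRight_app, Functor.whiskerLeft_app,
        Functor.map_comp, Category.assoc, hm]
      rw [← Functor.comp_map, α.naturality_assoc, reassoc_of% hm]
      simp only [Functor.comp_map, ← Functor.map_comp_assoc, hm]
      simp only [Functor.map_comp, Category.assoc, T.assoc]
      rw [← T.μ.naturality_assoc]
      rfl
  exact NatTrans.congr_app this X

end IsTerminalOver

end

/-- If `(P, α)` is terminal in the category `(H_* ↓ TH)` of endofunctors `S` on `D`
equipped with natural transformations `HS ⟶ TH`, then `P` carries a unique monad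
structure making `α` a Kleisli law. -/
theorem unique_monad_structure_of_terminal_in_endofunctors_over_TH
    {C : Type u₁} {D : Type u₂} [Category.{v₁} C] [Category.{v₂} D]
    (T : Monad C) (H : D ⥤ C)
    (P : D ⥤ D) (α : P ⋙ H ⟶ H ⋙ T.toFunctor)
    -- terminality of `(P, α)` in `(H_* ↓ TH)`
    (hterm : ∀ (S : D ⥤ D) (β : S ⋙ H ⟶ H ⋙ T.toFunctor),
      ∃! γ : S ⟶ P, Functor.whiskerRight γ H ≫ α = β) :
    ∃! um : (𝟭 D ⟶ P) × (P ⋙ P ⟶ P),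
      -- monad laws
      (∀ X : D, um.1.app (P.obj X) ≫ um.2.app X = 𝟙 (P.obj X)) ∧
      (∀ X : D, P.map (um.1.app X) ≫ um.2.app X = 𝟙 (P.obj X)) ∧
      (∀ X : D, P.map (um.2.app X) ≫ um.2.app X = um.2.app (P.obj X) ≫ um.2.app X) ∧
      -- `α` is a Kleisli law with respect to this monad structure
      (∀ X : D, H.map (um.1.app X) ≫ α.app X = T.η.app (H.obj X)) ∧
      (∀ X : D, H.map (um.2.app X) ≫ α.app X =
        α.app (P.obj X) ≫ T.toFunctor.map (α.app X) ≫ T.μ.app (H.obj X)) := by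
  obtain ⟨e, he, he_unique⟩ := hterm (𝟭 D) (kleisliUnit T H)
  obtain ⟨m, hm, hm_unique⟩ := hterm (P ⋙ P) (kleisliMul T H α)
  refine ⟨(e, m), ⟨IsTerminalOver.left_unit hterm he hm, IsTerminalOver.right_unit hterm he hm,
    IsTerminalOver.assoc hterm hm, whiskerRight_comp_eq_kleisliUnit_iff.mp he,
    whiskerRight_comp_eq_kleisliMul_iff.mp hm⟩, ?_⟩
  rintro ⟨e', m'⟩ ⟨-, -, -, he', hm'⟩
  exact Prod.ext (he_unique e' (whiskerRight_comp_eq_kleisliUnit_iff.mpr he'))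
    (hm_unique m' (whiskerRight_comp_eq_kleisliMul_iff.mpr hm'))
end

section
/- Let F : C → D be a lax monoidal functor between monoidal categories. Then F admits a right adjoint in the 2-category MonCat of monoidal categories, lax monoidal functors, and monoidal natural transformations if and only if F has a right adjoint G in Cat and F is strong monoidal. In that case there is a unique lax monoidal structure on G making the unit and counit of the adjunction into monoidal natural transformations. -/
/-!
If the unit and counit are monoidal, the mates `F (ε G) ≫ counit` and
`F ((unit ⊗ unit) ≫ μ G) ≫ counit` of the structure maps of `G` are inverse to `ε F` and `μ F`:
one composite is the monoidality of the counit, the other that of the unit followed by a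
triangle identity. Conversely, when `F` is strong, monoidality of the counit forces the structure
maps of `G` to be the mates of the inverses of those of `F`, i.e. `G` carries the structure
`Adjunction.rightAdjointLaxMonoidal`, for which unit and counit are indeed monoidal.
-/

open CategoryTheory Functor.LaxMonoidal

universe v₁ v₂ u₁ u₂

open MonoidalCategory

namespace CategoryTheory.Adjunction

variable {C : Type u₁} {D : Type u₂} [Category.{v₁} C] [Category.{v₂} D]
  [MonoidalCategory C] [MonoidalCategory D] {F : C ⥤ D} {G : D ⥤ C}

section Lax

variable [F.LaxMonoidal] [G.LaxMonoidal]

lemma ε_comp_map_ε_of_isMonoidal_unit (adj : F ⊣ G) [NatTrans.IsMonoidal adj.unit] :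
    ε G ≫ G.map (ε F) = adj.unit.app (𝟙_ C) := by
  simpa using (NatTrans.IsMonoidal.unit (τ := adj.unit)).symm

lemma tensorHom_comp_μ_comp_map_μ_of_isMonoidal_unit (adj : F ⊣ G) [NatTrans.IsMonoidal adj.unit]
    (X Y : C) :
    (adj.unit.app X ⊗ₘ adj.unit.app Y) ≫ μ G _ _ ≫ G.map (μ F X Y) = adj.unit.app (X ⊗ Y) := by
  simpa using (NatTrans.IsMonoidal.tensor (τ := adj.unit) X Y).symm

lemma ε_comp_map_ε_comp_counit_of_isMonoidal_counit (adj : F ⊣ G)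
    [NatTrans.IsMonoidal adj.counit] :
    ε F ≫ F.map (ε G) ≫ adj.counit.app (𝟙_ D) = 𝟙 _ := by
  simpa using NatTrans.IsMonoidal.unit (τ := adj.counit)

lemma μ_comp_map_μ_comp_counit_of_isMonoidal_counit (adj : F ⊣ G)
    [NatTrans.IsMonoidal adj.counit] (X Y : D) :
    μ F _ _ ≫ F.map (μ G X Y) ≫ adj.counit.app (X ⊗ Y) =
      adj.counit.app X ⊗ₘ adj.counit.app Y := by
  simpa using NatTrans.IsMonoidal.tensor (τ := adj.counit) X Y

lemma isIso_ε_of_isMonoidal (adj : F ⊣ G) [NatTrans.IsMonoidal adj.unit]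
    [NatTrans.IsMonoidal adj.counit] : IsIso (ε F) := by
  refine ⟨F.map (ε G) ≫ adj.counit.app (𝟙_ D),
    adj.ε_comp_map_ε_comp_counit_of_isMonoidal_counit, ?_⟩
  rw [Category.assoc, ← adj.counit_naturality, ← F.map_comp_assoc,
    adj.ε_comp_map_ε_of_isMonoidal_unit, adj.left_triangle_components]

lemma isIso_μ_of_isMonoidal (adj : F ⊣ G) [NatTrans.IsMonoidal adj.unit]
    [NatTrans.IsMonoidal adj.counit] (X Y : C) : IsIso (μ F X Y) := by
  refine ⟨F.map ((adj.unit.app X ⊗ₘ adj.unit.app Y) ≫ μ G _ _) ≫ adj.counit.app _, ?_, ?_⟩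
  · rw [F.map_comp, Category.assoc, ← μ_natural_assoc]
    dsimp only [Functor.comp_obj]
    rw [adj.μ_comp_map_μ_comp_counit_of_isMonoidal_counit, tensorHom_comp_tensorHom,
      adj.left_triangle_components, adj.left_triangle_components, tensorHom_id, id_whiskerRight]
  · rw [Category.assoc, ← adj.counit_naturality, ← F.map_comp_assoc, Category.assoc,
      adj.tensorHom_comp_μ_comp_map_μ_of_isMonoidal_unit,
      adj.left_triangle_components]

end Lax

variable (adj : F ⊣ G)

lemma isMonoidal_of_isMonoidal_counit [F.Monoidal] [G.LaxMonoidal]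
    [NatTrans.IsMonoidal adj.counit] : adj.IsMonoidal where
  leftAdjoint_ε := by
    rw [eq_unit_comp_map_iff, ← cancel_epi (ε F),
      adj.ε_comp_map_ε_comp_counit_of_isMonoidal_counit, Functor.Monoidal.ε_η]
  leftAdjoint_μ X Y := by
    rw [eq_unit_comp_map_iff, ← cancel_epi (μ F _ _),
      adj.μ_comp_map_μ_comp_counit_of_isMonoidal_counit, Functor.Monoidal.μ_δ_assoc]

lemma eq_rightAdjointLaxMonoidal_of_isMonoidal [F.OplaxMonoidal] (gl : G.LaxMonoidal)
    (h : letI := gl; adj.IsMonoidal) : gl = adj.rightAdjointLaxMonoidal := by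
  ext
  · rw [rightAdjointLaxMonoidal_ε, h.leftAdjoint_ε, homEquiv_unit]
  · rw [rightAdjointLaxMonoidal_μ, h.leftAdjoint_μ, homEquiv_unit]

lemma existsUnique_laxMonoidal_isMonoidal_unit_counit [F.Monoidal] :
    ∃! gl : G.LaxMonoidal, letI := gl
      NatTrans.IsMonoidal adj.unit ∧ NatTrans.IsMonoidal adj.counit := by
  let := adj.rightAdjointLaxMonoidal
  refine ⟨adj.rightAdjointLaxMonoidal, ⟨inferInstance, inferInstance⟩, fun gl ⟨_, _⟩ => ?_⟩
  exact adj.eq_rightAdjointLaxMonoidal_of_isMonoidal gl adj.isMonoidal_of_isMonoidal_counit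

end CategoryTheory.Adjunction

/-- A lax monoidal functor `F` admits a right adjoint in `MonCat` (i.e. a right adjoint
carrying a lax monoidal structure making the unit and counit of the adjunction monoidal)
iff `F` has a right adjoint in `Cat` and `F` is strong monoidal; and in that case, for any
right adjoint `G` of `F`, there is a unique lax monoidal structure on `G` making the unit
and counit monoidal. -/
theorem laxMonoidal_left_adjoint_iff_strong
    {C : Type u₁} {D : Type u₂} [Category.{v₁} C] [Category.{v₂} D]
    [MonoidalCategory C] [MonoidalCategory D]
    (F : C ⥤ D) [F.LaxMonoidal] :
    ((∃ (G : D ⥤ C) (_ : G.LaxMonoidal) (adj : F ⊣ G),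
        NatTrans.IsMonoidal adj.unit ∧ NatTrans.IsMonoidal adj.counit) ↔
      (F.IsLeftAdjoint ∧ IsIso (ε F) ∧ ∀ X Y : C, IsIso (μ F X Y))) ∧
    (∀ (G : D ⥤ C) (adj : F ⊣ G), IsIso (ε F) → (∀ X Y : C, IsIso (μ F X Y)) →
      ∃! gl : G.LaxMonoidal,
        letI := gl
        NatTrans.IsMonoidal adj.unit ∧ NatTrans.IsMonoidal adj.counit) := by
  refine ⟨⟨?_, ?_⟩, fun G adj _ _ => ?_⟩
  · rintro ⟨G, _, adj, _, _⟩
    exact ⟨⟨G, ⟨adj⟩⟩, adj.isIso_ε_of_isMonoidal, adj.isIso_μ_of_isMonoidal⟩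
  · rintro ⟨_, _, _⟩
    let : F.Monoidal := .ofLaxMonoidal F
    obtain ⟨gl, ⟨hunit, hcounit⟩, -⟩ :=
      (Adjunction.ofIsLeftAdjoint F).existsUnique_laxMonoidal_isMonoidal_unit_counit
    exact ⟨_, gl, _, hunit, hcounit⟩
  · let : F.Monoidal := .ofLaxMonoidal F
    exact adj.existsUnique_laxMonoidal_isMonoidal_unit_counit
end

section
/- Let C be a monoidal category such that the monoidal unit 1 is terminal, the functor C(1, −) is faithful, and C(1, −) is strong monoidal into (Set, ×). Let F : C → C be a functor equipped with maps θ_{A,B} : A ⊗ FB → F(A ⊗ B) natural in A and B such that F(λ_A) ∘ θ_{1,A} = λ_{FA} for all A (λ the left unitor). Then θ is the unique left strength for F; in particular θ automatically satisfies the associativity coherence axiom for strengths. -/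
open CategoryTheory MonoidalCategory

universe v₁ u₁

/-!
On a pair of global elements `(a, b)` of `A ⊗ FX`, naturality in `A` moves `a` past `θ` and
leaves `θ_{1,X}`, which the unit condition pins down: `θ ∘ (a, b) = F(a ▷ X ∘ λ⁻¹) ∘ b`. Global
elements of `A ⊗ FX` are exactly such pairs and they separate morphisms, so `θ` is unique; and
on a point `((a, a'), b)` both sides of the associativity axiom become
`F(a ▷ (B ⊗ X) ∘ λ⁻¹ ∘ a' ▷ X ∘ λ⁻¹) ∘ b`.
-/

namespace CategoryTheory.MonoidalCategory

variable {C : Type u₁} [Category.{v₁} C] [MonoidalCategory C]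

/-- The monoidal structure map `C(1,A) × C(1,B) → C(1,A ⊗ B)` of `C(1,−)`. -/
def pointPair {A B : C} (a : 𝟙_ C ⟶ A) (b : 𝟙_ C ⟶ B) : 𝟙_ C ⟶ A ⊗ B :=
  (λ_ (𝟙_ C)).inv ≫ (a ⊗ₘ b)

def leftPoint {A : C} (a : 𝟙_ C ⟶ A) (X : C) : X ⟶ A ⊗ X :=
  (λ_ X).inv ≫ a ▷ X

theorem pointPair_comp_whiskerLeft {A B B' : C} (a : 𝟙_ C ⟶ A) (b : 𝟙_ C ⟶ B) (g : B ⟶ B') :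
    pointPair a b ≫ A ◁ g = pointPair a (b ≫ g) := by
  rw [pointPair, pointPair, Category.assoc, ← id_tensorHom, tensorHom_comp_tensorHom,
    Category.comp_id]

theorem pointPair_comp_associator {A B Y : C} (a : 𝟙_ C ⟶ A) (a' : 𝟙_ C ⟶ B) (b : 𝟙_ C ⟶ Y) :
    pointPair (pointPair a a') b ≫ (α_ A B Y).hom = pointPair a (pointPair a' b) := by
  have unitors : (λ_ (𝟙_ C)).inv ≫ ((λ_ (𝟙_ C)).inv ⊗ₘ 𝟙 (𝟙_ C)) ≫
      (α_ (𝟙_ C) (𝟙_ C) (𝟙_ C)).hom = (λ_ (𝟙_ C)).inv ≫ (𝟙 (𝟙_ C) ⊗ₘ (λ_ (𝟙_ C)).inv) := by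
    monoidal
  calc pointPair (pointPair a a') b ≫ (α_ A B Y).hom
      = (λ_ (𝟙_ C)).inv ≫ ((λ_ (𝟙_ C)).inv ⊗ₘ 𝟙 (𝟙_ C)) ≫ ((a ⊗ₘ a') ⊗ₘ b) ≫ (α_ A B Y).hom := by
        rw [pointPair, pointPair, tensorHom_comp_tensorHom_assoc, Category.id_comp, Category.assoc]
    _ = ((λ_ (𝟙_ C)).inv ≫ ((λ_ (𝟙_ C)).inv ⊗ₘ 𝟙 (𝟙_ C)) ≫ (α_ (𝟙_ C) (𝟙_ C) (𝟙_ C)).hom) ≫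
          (a ⊗ₘ a' ⊗ₘ b) := by
        rw [associator_naturality]; simp only [Category.assoc]
    _ = pointPair a (pointPair a' b) := by
        rw [unitors, Category.assoc, tensorHom_comp_tensorHom, Category.id_comp]; rfl

theorem leftPoint_pointPair {A B : C} (a : 𝟙_ C ⟶ A) (a' : 𝟙_ C ⟶ B) (X : C) :
    leftPoint (pointPair a a') X ≫ (α_ A B X).hom = leftPoint a' X ≫ leftPoint a (B ⊗ X) := by
  have unitors : (λ_ X).inv ≫ ((λ_ (𝟙_ C)).inv ⊗ₘ 𝟙 X) ≫ (α_ (𝟙_ C) (𝟙_ C) X).hom =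
      (λ_ X).inv ≫ (λ_ (𝟙_ C ⊗ X)).inv := by
    monoidal
  calc leftPoint (pointPair a a') X ≫ (α_ A B X).hom
      = (λ_ X).inv ≫ ((λ_ (𝟙_ C)).inv ⊗ₘ 𝟙 X) ≫ ((a ⊗ₘ a') ⊗ₘ 𝟙 X) ≫ (α_ A B X).hom := by
        rw [leftPoint, pointPair, tensorHom_comp_tensorHom_assoc, Category.id_comp,
          tensorHom_id, Category.assoc]
    _ = ((λ_ X).inv ≫ ((λ_ (𝟙_ C)).inv ⊗ₘ 𝟙 X) ≫ (α_ (𝟙_ C) (𝟙_ C) X).hom) ≫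
          (a ⊗ₘ a' ⊗ₘ 𝟙 X) := by
        rw [associator_naturality]; simp only [Category.assoc]
    _ = (λ_ X).inv ≫ (λ_ (𝟙_ C ⊗ X)).inv ≫ (a ⊗ₘ a' ▷ X) := by
        rw [unitors, tensorHom_id, Category.assoc]
    _ = leftPoint a' X ≫ leftPoint a (B ⊗ X) := by
        rw [tensorHom_def', ← leftUnitor_inv_naturality_assoc, leftPoint, leftPoint,
          Category.assoc]

variable (F : C ⥤ C) (θ : ∀ A B : C, A ⊗ F.obj B ⟶ F.obj (A ⊗ B))

theorem eq_of_comp_map_leftUnitor_hom {X : C}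
    (hunit : θ (𝟙_ C) X ≫ F.map (λ_ X).hom = (λ_ (F.obj X)).hom) :
    θ (𝟙_ C) X = (λ_ (F.obj X)).hom ≫ F.map (λ_ X).inv := by
  rw [← hunit, Category.assoc, ← F.map_comp, Iso.hom_inv_id, F.map_id, Category.comp_id]

theorem pointPair_comp_eq_map_leftPoint
    (hnat : ∀ {A A' B B' : C} (f : A ⟶ A') (g : B ⟶ B'),
      tensorHom f (F.map g) ≫ θ A' B' = θ A B ≫ F.map (tensorHom f g))
    (hunit : ∀ A : C, θ (𝟙_ C) A ≫ F.map (λ_ A).hom = (λ_ (F.obj A)).hom)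
    {A X : C} (a : 𝟙_ C ⟶ A) (b : 𝟙_ C ⟶ F.obj X) :
    pointPair a b ≫ θ A X = b ≫ F.map (leftPoint a X) := by
  calc pointPair a b ≫ θ A X
      = (λ_ (𝟙_ C)).inv ≫ 𝟙_ C ◁ b ≫ (a ⊗ₘ F.map (𝟙 X)) ≫ θ A X := by
        rw [pointPair, F.map_id, tensorHom_id, tensorHom_def', Category.assoc, Category.assoc]
    _ = (λ_ (𝟙_ C)).inv ≫ 𝟙_ C ◁ b ≫ θ (𝟙_ C) X ≫ F.map (a ▷ X) := by
        rw [hnat, tensorHom_id]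
    _ = b ≫ F.map (leftPoint a X) := by
        rw [eq_of_comp_map_leftUnitor_hom F θ (hunit X), Category.assoc,
          ← leftUnitor_inv_naturality_assoc, Iso.inv_hom_id_assoc, ← F.map_comp, leftPoint]

end CategoryTheory.MonoidalCategory

theorem unique_left_strength_of_concrete_pointed_general
    {C : Type u₁} [Category.{v₁} C] [MonoidalCategory C]
    -- `C(1,−)` is faithful
    (hfaith : ∀ {X Y : C} (f g : X ⟶ Y), (∀ h : 𝟙_ C ⟶ X, h ≫ f = h ≫ g) → f = g)
    -- `C(1,−)` is strong monoidal into `(Set, ×)`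
    (hstrong : ∀ X Y : C, Function.Bijective
      (fun p : (𝟙_ C ⟶ X) × (𝟙_ C ⟶ Y) => (λ_ (𝟙_ C)).inv ≫ tensorHom p.1 p.2))
    (F : C ⥤ C)
    (θ : ∀ A B : C, A ⊗ F.obj B ⟶ F.obj (A ⊗ B))
    (hnat : ∀ {A A' B B' : C} (f : A ⟶ A') (g : B ⟶ B'),
      tensorHom f (F.map g) ≫ θ A' B' = θ A B ≫ F.map (tensorHom f g))
    (hunit : ∀ A : C, θ (𝟙_ C) A ≫ F.map (λ_ A).hom = (λ_ (F.obj A)).hom) :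
    -- associativity coherence holds automatically
    (∀ A B X : C,
      (α_ A B (F.obj X)).hom ≫ tensorHom (𝟙 A) (θ B X) ≫ θ A (B ⊗ X) =
        θ (A ⊗ B) X ≫ F.map (α_ A B X).hom) ∧
    -- and `θ` is the unique such family
    (∀ θ' : ∀ A B : C, A ⊗ F.obj B ⟶ F.obj (A ⊗ B),
      (∀ {A A' B B' : C} (f : A ⟶ A') (g : B ⟶ B'),
        tensorHom f (F.map g) ≫ θ' A' B' = θ' A B ≫ F.map (tensorHom f g)) →
      (∀ A : C, θ' (𝟙_ C) A ≫ F.map (λ_ A).hom = (λ_ (F.obj A)).hom) →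
      ∀ A B : C, θ' A B = θ A B) := by
  have hθ {A X : C} := pointPair_comp_eq_map_leftPoint F θ hnat hunit (A := A) (X := X)
  refine ⟨fun A B X => ?_, fun θ' hnat' hunit' A B => ?_⟩
  · refine hfaith _ _ ((hstrong _ _).surjective.forall.2 fun ⟨p, b⟩ => ?_)
    obtain ⟨⟨a, a'⟩, rfl⟩ := (hstrong A B).surjective p
    change pointPair (pointPair a a') b ≫ _ = pointPair (pointPair a a') b ≫ _
    calc pointPair (pointPair a a') b ≫ (α_ A B (F.obj X)).hom ≫ (𝟙 A ⊗ₘ θ B X) ≫ θ A (B ⊗ X)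
        = pointPair a (pointPair a' b ≫ θ B X) ≫ θ A (B ⊗ X) := by
          rw [reassoc_of% pointPair_comp_associator, id_tensorHom,
            reassoc_of% pointPair_comp_whiskerLeft]
      _ = b ≫ F.map (leftPoint a' X ≫ leftPoint a (B ⊗ X)) := by
          rw [hθ, hθ, F.map_comp, Category.assoc]
      _ = pointPair (pointPair a a') b ≫ θ (A ⊗ B) X ≫ F.map (α_ A B X).hom := by
          rw [← leftPoint_pointPair, F.map_comp, reassoc_of% hθ]
  · refine hfaith _ _ ((hstrong _ _).surjective.forall.2 fun ⟨a, b⟩ => ?_)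
    exact (pointPair_comp_eq_map_leftPoint F θ' hnat' hunit' a b).trans (hθ a b).symm

/-- In a concrete pointed monoidal category (the unit is terminal, `C(1,−)` is faithful and
strong monoidal into `Set`), any natural family `θ_{A,B} : A ⊗ FB ⟶ F(A ⊗ B)` satisfying the
left unitor condition is the unique left strength for `F`: it automatically satisfies the
associativity coherence, and any other such family equals it. -/
theorem unique_left_strength_of_concrete_pointed
    {C : Type u₁} [Category.{v₁} C] [MonoidalCategory C]
    -- the monoidal unit is terminal
    (hterm : Limits.IsTerminal (𝟙_ C))
    -- `C(1,−)` is faithful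
    (hfaith : ∀ {X Y : C} (f g : X ⟶ Y), (∀ h : 𝟙_ C ⟶ X, h ≫ f = h ≫ g) → f = g)
    -- `C(1,−)` is strong monoidal into `(Set, ×)`
    (hstrong : ∀ X Y : C, Function.Bijective
      (fun p : (𝟙_ C ⟶ X) × (𝟙_ C ⟶ Y) => (λ_ (𝟙_ C)).inv ≫ tensorHom p.1 p.2))
    (F : C ⥤ C)
    (θ : ∀ A B : C, A ⊗ F.obj B ⟶ F.obj (A ⊗ B))
    (hnat : ∀ {A A' B B' : C} (f : A ⟶ A') (g : B ⟶ B'),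
      tensorHom f (F.map g) ≫ θ A' B' = θ A B ≫ F.map (tensorHom f g))
    (hunit : ∀ A : C, θ (𝟙_ C) A ≫ F.map (λ_ A).hom = (λ_ (F.obj A)).hom) :
    -- associativity coherence holds automatically
    (∀ A B X : C,
      (α_ A B (F.obj X)).hom ≫ tensorHom (𝟙 A) (θ B X) ≫ θ A (B ⊗ X) =
        θ (A ⊗ B) X ≫ F.map (α_ A B X).hom) ∧
    -- and `θ` is the unique such family
    (∀ θ' : ∀ A B : C, A ⊗ F.obj B ⟶ F.obj (A ⊗ B),
      (∀ {A A' B B' : C} (f : A ⟶ A') (g : B ⟶ B'),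
        tensorHom f (F.map g) ≫ θ' A' B' = θ' A B ≫ F.map (tensorHom f g)) →
      (∀ A : C, θ' (𝟙_ C) A ≫ F.map (λ_ A).hom = (λ_ (F.obj A)).hom) →
      ∀ A B : C, θ' A B = θ A B) :=
  unique_left_strength_of_concrete_pointed_general hfaith hstrong F θ hnat hunit
end

section
/- Let C be a concrete pointed monoidal category and T a monad on C equipped with natural maps χ_{A,B} : TA ⊗ TB → T(A ⊗ B) satisfying all the coherence laws of a monoidal monad except possibly the associativity coherence law. Then χ automatically satisfies the associativity coherence law, and hence (T, χ) is a monoidal (commutative) monad. In particular, χ equals the derived strength μ_{A⊗B} ∘ T(θ_{A,B}) ∘ ϑ_{A,TB}, where θ and ϑ are the left and right strengths θ_{A,B} = χ_{A,B}(η_A ⊗ 1_{TB}) and ϑ_{A,B} = χ_{A,B}(1_{TA} ⊗ η_B). -/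
/-!
Points separate morphisms and a point of `X ⊗ Y` is a pair of points, so it suffices to compute
on points. Unitality and the compatibility of `χ` with `μ` evaluate `χ` on a pair of points
`(a, b)` of `T A ⊗ T B` as the Kleisli expression `do x ← a; y ← b; η (x, y)`. Both sides of the
associativity law then evaluate on `((a, b), c)` to `do x ← a; y ← b; w ← c; η (x, (y, w))`, by
associativity of Kleisli composition. The derived-strength formula needs no points: the unit
laws factor `T A ◁ b` through `μ ⊗ μ`, which `χ` turns into `μ`.
-/

open CategoryTheory MonoidalCategory

universe v₁ u₁

namespace CategoryTheory

section Points

variable {C : Type u₁} [Category.{v₁} C] [MonoidalCategory C]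

theorem hom_ext_of_tensor_points
    (hsep : ∀ {X Y : C} (f g : X ⟶ Y), (∀ h : 𝟙_ C ⟶ X, h ≫ f = h ≫ g) → f = g)
    (hsurj : ∀ X Y : C, Function.Surjective
      (fun p : (𝟙_ C ⟶ X) × (𝟙_ C ⟶ Y) => (λ_ (𝟙_ C)).inv ≫ (p.1 ⊗ₘ p.2)))
    {U V Z : C} {f g : U ⊗ V ⟶ Z}
    (h : ∀ (u : 𝟙_ C ⟶ U) (v : 𝟙_ C ⟶ V),
      (λ_ (𝟙_ C)).inv ≫ (u ⊗ₘ v) ≫ f = (λ_ (𝟙_ C)).inv ≫ (u ⊗ₘ v) ≫ g) :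
    f = g := by
  refine hsep f g fun p => ?_
  obtain ⟨⟨u, v⟩, rfl⟩ := hsurj U V p
  simpa using h u v

theorem point_comp_rightUnitor_inv_whiskerLeft {P Q : C} (z : 𝟙_ C ⟶ P) (w : 𝟙_ C ⟶ Q) :
    z ≫ (ρ_ P).inv ≫ P ◁ w = (λ_ (𝟙_ C)).inv ≫ (z ⊗ₘ w) := by
  rw [rightUnitor_inv_naturality_assoc, unitors_inv_equal, ← MonoidalCategory.tensorHom_def]

theorem tensor_points_associator {X Y Z : C} (a : 𝟙_ C ⟶ X) (b : 𝟙_ C ⟶ Y)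
    (c : 𝟙_ C ⟶ Z) :
    (((λ_ (𝟙_ C)).inv ≫ (a ⊗ₘ b)) ⊗ₘ c) ≫ (α_ X Y Z).hom =
      a ⊗ₘ ((λ_ (𝟙_ C)).inv ≫ (b ⊗ₘ c)) := by
  monoidal

end Points

namespace Monad

variable {C : Type u₁} [Category.{v₁} C] (T : Monad C)

theorem map_map_comp_μ {X Y : C} (f : X ⟶ Y) :
    T.map (T.map f) ≫ T.μ.app Y = T.μ.app X ≫ T.map f :=
  T.μ.naturality f

theorem map_comp_μ_comp_map_comp_μ {X Y Z : C} (f : X ⟶ T.obj Y) (g : Y ⟶ T.obj Z) :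
    T.map f ≫ T.μ.app Y ≫ T.map g ≫ T.μ.app Z =
      T.map (f ≫ T.map g ≫ T.μ.app Z) ≫ T.μ.app Z := by
  simp only [Functor.map_comp, Category.assoc, T.assoc, reassoc_of% map_map_comp_μ]

variable [MonoidalCategory C] (χ : ∀ A B : C, T.obj A ⊗ T.obj B ⟶ T.obj (A ⊗ B))

def LaxNatural : Prop :=
  ∀ {A A' B B' : C} (f : A ⟶ A') (g : B ⟶ B'),
    (T.map f ⊗ₘ T.map g) ≫ χ A' B' = χ A B ≫ T.map (f ⊗ₘ g)

def LaxLeftUnital : Prop :=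
  ∀ A : C, (λ_ (T.obj A)).hom = T.η.app (𝟙_ C) ▷ T.obj A ≫ χ (𝟙_ C) A ≫ T.map (λ_ A).hom

def LaxRightUnital : Prop :=
  ∀ A : C, (ρ_ (T.obj A)).hom = T.obj A ◁ T.η.app (𝟙_ C) ≫ χ A (𝟙_ C) ≫ T.map (ρ_ A).hom

def LaxMultiplicative : Prop :=
  ∀ A B : C, (T.μ.app A ⊗ₘ T.μ.app B) ≫ χ A B =
    χ (T.obj A) (T.obj B) ≫ T.map (χ A B) ≫ T.μ.app (A ⊗ B)

def leftStrength (A B : C) : A ⊗ T.obj B ⟶ T.obj (A ⊗ B) :=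
  T.η.app A ▷ T.obj B ≫ χ A B

/-- `a ↦ θ(a, x)` for a point `x` of `T X`, where `θ = leftStrength`. -/
def pointStrength {X : C} (x : 𝟙_ C ⟶ T.obj X) (A : C) : A ⟶ T.obj (A ⊗ X) :=
  (ρ_ A).inv ≫ A ◁ x ≫ T.leftStrength χ A X

variable {T χ}

theorem leftStrength_naturality (hnat : T.LaxNatural χ) {A A' : C} (B : C) (f : A ⟶ A') :
    f ▷ T.obj B ≫ T.leftStrength χ A' B = T.leftStrength χ A B ≫ T.map (f ▷ B) := by
  have hχ : T.map f ▷ T.obj B ≫ χ A' B = χ A B ≫ T.map (f ▷ B) := by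
    simpa only [Functor.map_id, tensorHom_id] using hnat f (𝟙 B)
  have hη : f ≫ T.η.app A' = T.η.app A ≫ T.map f := T.η.naturality f
  rw [leftStrength, leftStrength, ← comp_whiskerRight_assoc, hη, comp_whiskerRight_assoc, hχ,
    Category.assoc]

theorem pointStrength_naturality (hnat : T.LaxNatural χ) {X A A' : C}
    (x : 𝟙_ C ⟶ T.obj X) (f : A ⟶ A') :
    f ≫ T.pointStrength χ x A' = T.pointStrength χ x A ≫ T.map (f ▷ X) := by
  simp only [pointStrength, rightUnitor_inv_naturality_assoc, ← whisker_exchange_assoc,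
    leftStrength_naturality hnat, Category.assoc]

theorem leftStrength_tensorUnit (hleft : T.LaxLeftUnital χ) (X : C) :
    T.leftStrength χ (𝟙_ C) X = (λ_ (T.obj X)).hom ≫ T.map (λ_ X).inv := by
  simp [leftStrength, hleft X, ← T.map_comp]

theorem whiskerLeft_η_tensorUnit_comp (hright : T.LaxRightUnital χ) (A : C) :
    T.obj A ◁ T.η.app (𝟙_ C) ≫ χ A (𝟙_ C) = (ρ_ (T.obj A)).hom ≫ T.map (ρ_ A).inv := by
  simp [hright A, ← T.map_comp]

theorem whiskerLeft_comp (hnat : T.LaxNatural χ) (hμ : T.LaxMultiplicative χ)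
    {A B Z : C} (b : Z ⟶ T.obj B) :
    T.obj A ◁ b ≫ χ A B = T.obj A ◁ T.η.app Z ≫ χ A Z ≫
      T.map (A ◁ b ≫ T.leftStrength χ A B) ≫ T.μ.app (A ⊗ B) := by
  have hunit : T.obj A ◁ b =
      (T.map (T.η.app A) ⊗ₘ (T.η.app Z ≫ T.map b)) ≫ (T.μ.app A ⊗ₘ T.μ.app B) := by
    rw [tensorHom_comp_tensorHom, Category.assoc, T.right_unit, ← T.η.naturality_assoc,
      T.left_unit]
    simp
  calc T.obj A ◁ b ≫ χ A B
      = T.obj A ◁ T.η.app Z ≫ (T.map (T.η.app A) ⊗ₘ T.map b) ≫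
          χ (T.obj A) (T.obj B) ≫ T.map (χ A B) ≫ T.μ.app (A ⊗ B) := by
        rw [hunit, Category.assoc, hμ, whiskerLeft_comp_tensorHom_assoc]
    _ = _ := by
        rw [reassoc_of% hnat (T.η.app A) b, tensorHom_def', leftStrength]
        simp only [Functor.map_comp, Category.assoc]

theorem eq_derivedStrength (hnat : T.LaxNatural χ) (hμ : T.LaxMultiplicative χ) (A B : C) :
    χ A B = T.obj A ◁ T.η.app (T.obj B) ≫ χ A (T.obj B) ≫
      T.map (T.leftStrength χ A B) ≫ T.μ.app (A ⊗ B) := by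
  simpa using whiskerLeft_comp hnat hμ (𝟙 (T.obj B))

theorem point_comp_pointStrength (hnat : T.LaxNatural χ) (hleft : T.LaxLeftUnital χ)
    {A X : C} (z : 𝟙_ C ⟶ A) (x : 𝟙_ C ⟶ T.obj X) :
    z ≫ T.pointStrength χ x A = x ≫ T.map ((λ_ X).inv ≫ z ▷ X) := by
  rw [pointStrength, reassoc_of% point_comp_rightUnitor_inv_whiskerLeft, tensorHom_def',
    Category.assoc, leftStrength_naturality hnat, leftStrength_tensorUnit hleft]
  simp

theorem tensor_points_comp (hnat : T.LaxNatural χ) (hμ : T.LaxMultiplicative χ)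
    (hright : T.LaxRightUnital χ) {A B : C} (a : 𝟙_ C ⟶ T.obj A) (b : 𝟙_ C ⟶ T.obj B) :
    (λ_ (𝟙_ C)).inv ≫ (a ⊗ₘ b) ≫ χ A B = a ≫ T.map (T.pointStrength χ b A) ≫ T.μ.app (A ⊗ B) := by
  rw [MonoidalCategory.tensorHom_def, Category.assoc, whiskerLeft_comp hnat hμ,
    reassoc_of% whiskerLeft_η_tensorUnit_comp hright, unitors_inv_equal, pointStrength]
  simp

theorem pointStrength_comp_map_pointStrength
    (hsep : ∀ {X Y : C} (f g : X ⟶ Y), (∀ h : 𝟙_ C ⟶ X, h ≫ f = h ≫ g) → f = g)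
    (hnat : T.LaxNatural χ) (hleft : T.LaxLeftUnital χ) {A B X : C}
    (b : 𝟙_ C ⟶ T.obj B) (x : 𝟙_ C ⟶ T.obj X) :
    T.pointStrength χ b A ≫ T.map (T.pointStrength χ x (A ⊗ B)) ≫ T.μ.app ((A ⊗ B) ⊗ X) ≫
        T.map (α_ A B X).hom =
      T.pointStrength χ (b ≫ T.map (T.pointStrength χ x B) ≫ T.μ.app (B ⊗ X)) A := by
  refine hsep _ _ fun z => ?_
  have hα : ((λ_ B).inv ≫ z ▷ B) ▷ X ≫ (α_ A B X).hom = (λ_ (B ⊗ X)).inv ≫ z ▷ (B ⊗ X) := by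
    monoidal
  calc z ≫ T.pointStrength χ b A ≫ T.map (T.pointStrength χ x (A ⊗ B)) ≫
        T.μ.app ((A ⊗ B) ⊗ X) ≫ T.map (α_ A B X).hom
      = b ≫ T.map ((λ_ B).inv ≫ z ▷ B ≫ T.pointStrength χ x (A ⊗ B)) ≫
          T.μ.app ((A ⊗ B) ⊗ X) ≫ T.map (α_ A B X).hom := by
        rw [reassoc_of% point_comp_pointStrength hnat hleft]
        simp only [Functor.map_comp, Category.assoc]
    _ = b ≫ T.map (T.pointStrength χ x B) ≫ T.map (T.map (((λ_ B).inv ≫ z ▷ B) ▷ X)) ≫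
          T.μ.app ((A ⊗ B) ⊗ X) ≫ T.map (α_ A B X).hom := by
        rw [← Category.assoc (λ_ B).inv, pointStrength_naturality hnat]
        simp only [Functor.map_comp, Category.assoc]
    _ = z ≫ T.pointStrength χ (b ≫ T.map (T.pointStrength χ x B) ≫ T.μ.app (B ⊗ X)) A := by
        rw [point_comp_pointStrength hnat hleft, ← hα]
        simp only [Functor.map_comp, Category.assoc, reassoc_of% map_map_comp_μ]

theorem lax_associativity
    (hsep : ∀ {X Y : C} (f g : X ⟶ Y), (∀ h : 𝟙_ C ⟶ X, h ≫ f = h ≫ g) → f = g)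
    (hsurj : ∀ X Y : C, Function.Surjective
      (fun p : (𝟙_ C ⟶ X) × (𝟙_ C ⟶ Y) => (λ_ (𝟙_ C)).inv ≫ (p.1 ⊗ₘ p.2)))
    (hnat : T.LaxNatural χ) (hleft : T.LaxLeftUnital χ) (hright : T.LaxRightUnital χ)
    (hμ : T.LaxMultiplicative χ) (A B X : C) :
    χ A B ▷ T.obj X ≫ χ (A ⊗ B) X ≫ T.map (α_ A B X).hom =
      (α_ (T.obj A) (T.obj B) (T.obj X)).hom ≫ T.obj A ◁ χ B X ≫ χ A (B ⊗ X) := by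
  refine hom_ext_of_tensor_points hsep hsurj fun u x => ?_
  obtain ⟨⟨a, b⟩, rfl⟩ := hsurj (T.obj A) (T.obj B) u
  dsimp only
  calc (λ_ (𝟙_ C)).inv ≫ (((λ_ (𝟙_ C)).inv ≫ (a ⊗ₘ b)) ⊗ₘ x) ≫
        χ A B ▷ T.obj X ≫ χ (A ⊗ B) X ≫ T.map (α_ A B X).hom
      = (λ_ (𝟙_ C)).inv ≫ ((a ≫ T.map (T.pointStrength χ b A) ≫ T.μ.app (A ⊗ B)) ⊗ₘ x) ≫
          χ (A ⊗ B) X ≫ T.map (α_ A B X).hom := by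
        rw [← tensorHom_id, tensorHom_comp_tensorHom_assoc, Category.comp_id, Category.assoc,
          tensor_points_comp hnat hμ hright]
    _ = a ≫ T.map (T.pointStrength χ b A) ≫ T.μ.app (A ⊗ B) ≫
          T.map (T.pointStrength χ x (A ⊗ B)) ≫ T.μ.app ((A ⊗ B) ⊗ X) ≫
          T.map (α_ A B X).hom := by
        rw [reassoc_of% tensor_points_comp hnat hμ hright]
        simp only [Category.assoc]
    _ = a ≫ T.map (T.pointStrength χ (b ≫ T.map (T.pointStrength χ x B) ≫ T.μ.app (B ⊗ X)) A) ≫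
          T.μ.app (A ⊗ (B ⊗ X)) := by
        rw [reassoc_of% map_comp_μ_comp_map_comp_μ, ← map_map_comp_μ, ← T.map_comp_assoc]
        simp only [Category.assoc]
        rw [pointStrength_comp_map_pointStrength hsep hnat hleft]
    _ = (λ_ (𝟙_ C)).inv ≫ (a ⊗ₘ ((λ_ (𝟙_ C)).inv ≫ (b ⊗ₘ x) ≫ χ B X)) ≫ χ A (B ⊗ X) := by
        rw [tensor_points_comp hnat hμ hright, tensor_points_comp hnat hμ hright]
    _ = (λ_ (𝟙_ C)).inv ≫ (((λ_ (𝟙_ C)).inv ≫ (a ⊗ₘ b)) ⊗ₘ x) ≫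
          (α_ (T.obj A) (T.obj B) (T.obj X)).hom ≫ T.obj A ◁ χ B X ≫ χ A (B ⊗ X) := by
        rw [reassoc_of% tensor_points_associator, ← id_tensorHom, tensorHom_comp_tensorHom_assoc,
          Category.comp_id, Category.assoc]

end Monad

end CategoryTheory

theorem monoidal_monad_assoc_automatic_general
    {C : Type u₁} [Category.{v₁} C] [MonoidalCategory C]
    -- concrete pointed monoidal category
    (hfaith : ∀ {X Y : C} (f g : X ⟶ Y), (∀ h : 𝟙_ C ⟶ X, h ≫ f = h ≫ g) → f = g)
    (hstrong : ∀ X Y : C, Function.Bijective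
      (fun p : (𝟙_ C ⟶ X) × (𝟙_ C ⟶ Y) => (λ_ (𝟙_ C)).inv ≫ tensorHom p.1 p.2))
    (T : Monad C)
    (χ : ∀ A B : C, T.obj A ⊗ T.obj B ⟶ T.obj (A ⊗ B))
    -- naturality
    (hnat : ∀ {A A' B B' : C} (f : A ⟶ A') (g : B ⟶ B'),
      tensorHom (T.map f) (T.map g) ≫ χ A' B' = χ A B ≫ T.map (tensorHom f g))
    -- lax unitality laws (with lax unit `η_{𝟙}`)
    (hleft : ∀ A : C, (λ_ (T.obj A)).hom =
      tensorHom (T.η.app (𝟙_ C)) (𝟙 (T.obj A)) ≫ χ (𝟙_ C) A ≫ T.map (λ_ A).hom)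
    (hright : ∀ A : C, (ρ_ (T.obj A)).hom =
      tensorHom (𝟙 (T.obj A)) (T.η.app (𝟙_ C)) ≫ χ A (𝟙_ C) ≫ T.map (ρ_ A).hom)
    -- the multiplication of the monad is a monoidal natural transformation
    (hμ : ∀ A B : C, tensorHom (T.μ.app A) (T.μ.app B) ≫ χ A B =
      χ (T.obj A) (T.obj B) ≫ T.map (χ A B) ≫ T.μ.app (A ⊗ B)) :
    -- the associativity coherence law holds
    (∀ A B X : C,
      tensorHom (χ A B) (𝟙 (T.obj X)) ≫ χ (A ⊗ B) X ≫ T.map (α_ A B X).hom =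
        (α_ (T.obj A) (T.obj B) (T.obj X)).hom ≫
          tensorHom (𝟙 (T.obj A)) (χ B X) ≫ χ A (B ⊗ X)) ∧
    -- and `χ` is the strength derived from the left and right strengths
    (∀ A B : C,
      χ A B = tensorHom (𝟙 (T.obj A)) (T.η.app (T.obj B)) ≫ χ A (T.obj B) ≫
        T.map (tensorHom (T.η.app A) (𝟙 (T.obj B)) ≫ χ A B) ≫ T.μ.app (A ⊗ B)) := by
  have hleft' : T.LaxLeftUnital χ := fun A => by simpa only [tensorHom_id] using hleft A
  have hright' : T.LaxRightUnital χ := fun A => by simpa only [id_tensorHom] using hright A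
  refine ⟨fun A B X => ?_, fun A B => ?_⟩
  · simpa only [tensorHom_id, id_tensorHom] using
      Monad.lax_associativity hfaith (fun X Y => (hstrong X Y).2) hnat hleft' hright' hμ A B X
  · simpa only [tensorHom_id, id_tensorHom, Monad.leftStrength] using
      Monad.eq_derivedStrength hnat hμ A B

/-- In a concrete pointed monoidal category, a monad `T` with natural maps
`χ_{A,B} : TA ⊗ TB ⟶ T(A ⊗ B)` satisfying all the coherence laws of a monoidal monad
except possibly associativity automatically satisfies the associativity coherence law,
and `χ` equals the strength derived from the left and right strengths
`θ_{A,B} = χ_{A,B}(η_A ⊗ 1)` and `ϑ_{A,B} = χ_{A,B}(1 ⊗ η_B)`. -/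
theorem monoidal_monad_assoc_automatic
    {C : Type u₁} [Category.{v₁} C] [MonoidalCategory C]
    -- concrete pointed monoidal category
    (hterm : Limits.IsTerminal (𝟙_ C))
    (hfaith : ∀ {X Y : C} (f g : X ⟶ Y), (∀ h : 𝟙_ C ⟶ X, h ≫ f = h ≫ g) → f = g)
    (hstrong : ∀ X Y : C, Function.Bijective
      (fun p : (𝟙_ C ⟶ X) × (𝟙_ C ⟶ Y) => (λ_ (𝟙_ C)).inv ≫ tensorHom p.1 p.2))
    (T : Monad C)
    (χ : ∀ A B : C, T.obj A ⊗ T.obj B ⟶ T.obj (A ⊗ B))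
    -- naturality
    (hnat : ∀ {A A' B B' : C} (f : A ⟶ A') (g : B ⟶ B'),
      tensorHom (T.map f) (T.map g) ≫ χ A' B' = χ A B ≫ T.map (tensorHom f g))
    -- lax unitality laws (with lax unit `η_{𝟙}`)
    (hleft : ∀ A : C, (λ_ (T.obj A)).hom =
      tensorHom (T.η.app (𝟙_ C)) (𝟙 (T.obj A)) ≫ χ (𝟙_ C) A ≫ T.map (λ_ A).hom)
    (hright : ∀ A : C, (ρ_ (T.obj A)).hom =
      tensorHom (𝟙 (T.obj A)) (T.η.app (𝟙_ C)) ≫ χ A (𝟙_ C) ≫ T.map (ρ_ A).hom)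
    -- the unit of the monad is a monoidal natural transformation
    (hη : ∀ A B : C, T.η.app (A ⊗ B) = tensorHom (T.η.app A) (T.η.app B) ≫ χ A B)
    -- the multiplication of the monad is a monoidal natural transformation
    (hμ : ∀ A B : C, tensorHom (T.μ.app A) (T.μ.app B) ≫ χ A B =
      χ (T.obj A) (T.obj B) ≫ T.map (χ A B) ≫ T.μ.app (A ⊗ B)) :
    -- the associativity coherence law holds
    (∀ A B X : C,
      tensorHom (χ A B) (𝟙 (T.obj X)) ≫ χ (A ⊗ B) X ≫ T.map (α_ A B X).hom =
        (α_ (T.obj A) (T.obj B) (T.obj X)).hom ≫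
          tensorHom (𝟙 (T.obj A)) (χ B X) ≫ χ A (B ⊗ X)) ∧
    -- and `χ` is the strength derived from the left and right strengths
    (∀ A B : C,
      χ A B = tensorHom (𝟙 (T.obj A)) (T.η.app (T.obj B)) ≫ χ A (T.obj B) ≫
        T.map (tensorHom (T.η.app A) (𝟙 (T.obj B)) ≫ χ A B) ≫ T.μ.app (A ⊗ B)) :=
  monoidal_monad_assoc_automatic_general hfaith hstrong T χ hnat hleft hright hμ
end

section
/- Let κ be a measurable cardinal and U a non-principal κ-complete ultrafilter on κ. Define U ⊗_r U = { M ⊆ κ × κ : { x : { y : (x,y) ∈ M } ∈ U } ∈ U } and U ⊗_l U = { M ⊆ κ × κ : { y : { x : (x,y) ∈ M } ∈ U } ∈ U }. Then the set Δ⁻ = { (x,y) ∈ κ × κ : x < y } belongs to U ⊗_r U but not to U ⊗_l U; hence U ⊗_r U ≠ U ⊗_l U. -/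
universe u

/-- For a non-principal `κ`-complete ultrafilter `U` on a measurable cardinal `κ`,
the set `Δ⁻ = {(x,y) : x < y}` belongs to `U ⊗_r U` but not to `U ⊗_l U`;
in particular `U ⊗_r U ≠ U ⊗_l U`. -/
theorem measurable_cardinal_ultrafilter_strengths_disagree
    {κ : Type u} [LinearOrder κ]
    -- `κ` is (the order type of) a cardinal: initial segments are small
    (hsmall : ∀ x : κ, Cardinal.mk {y : κ // y ≤ x} < Cardinal.mk κ)
    -- `κ` is uncountable (as any measurable cardinal is)
    (huncount : Cardinal.aleph0 < Cardinal.mk κ)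
    (U : Ultrafilter κ)
    -- `U` is non-principal
    (hfree : ∀ x : κ, {x} ∉ U)
    -- `U` is `κ`-complete
    (hcomplete : ∀ (ι : Type u) (f : ι → Set κ), Cardinal.mk ι < Cardinal.mk κ →
      (∀ i, f i ∈ U) → (⋂ i, f i) ∈ U) :
    {p : κ × κ | p.1 < p.2} ∈
      {M : Set (κ × κ) | {x : κ | {y : κ | (x, y) ∈ M} ∈ U} ∈ U} ∧
    {p : κ × κ | p.1 < p.2} ∉
      {M : Set (κ × κ) | {y : κ | {x : κ | (x, y) ∈ M} ∈ U} ∈ U} ∧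
    {M : Set (κ × κ) | {x : κ | {y : κ | (x, y) ∈ M} ∈ U} ∈ U} ≠
      {M : Set (κ × κ) | {y : κ | {x : κ | (x, y) ∈ M} ∈ U} ∈ U} := by
  -- small sets are not in U
  have key : ∀ S : Set κ, Cardinal.mk S < Cardinal.mk κ → S ∉ U := by
    intro S hS hSU
    have h1 : (⋂ z : S, ({(z : κ)}ᶜ : Set κ)) ∈ U :=
      hcomplete S (fun z => {(z : κ)}ᶜ) hS
        (fun z => (Ultrafilter.compl_mem_iff_notMem).2 (hfree z))
    have h2 : (⋂ z : S, ({(z : κ)}ᶜ : Set κ)) = Sᶜ := by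
      ext y
      simp only [Set.mem_iInter, Set.mem_compl_iff, Set.mem_singleton_iff]
      exact ⟨fun h hy => h ⟨y, hy⟩ rfl, fun h z hz => h (hz ▸ z.2)⟩
    rw [h2] at h1
    exact (Ultrafilter.compl_mem_iff_notMem.1 h1) hSU
  have hA : ∀ x : κ, {y : κ | x < y} ∈ U := by
    intro x
    have : ({y : κ | y ≤ x} : Set κ) ∉ U := key _ (hsmall x)
    have h := Ultrafilter.compl_mem_iff_notMem.2 this
    have he : ({y : κ | y ≤ x} : Set κ)ᶜ = {y : κ | x < y} := by
      ext y; simp [not_le]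
    rwa [he] at h
  have hB : ∀ y : κ, {x : κ | x < y} ∉ U := by
    intro y
    apply key
    calc Cardinal.mk {x : κ | x < y} ≤ Cardinal.mk {x : κ | x ≤ y} :=
          Cardinal.mk_le_mk_of_subset (fun x hx => le_of_lt hx)
      _ < Cardinal.mk κ := hsmall y
  refine ⟨?_, ?_, ?_⟩
  · have : {x : κ | {y : κ | (x, y) ∈ {p : κ × κ | p.1 < p.2}} ∈ U} = Set.univ := by
      ext x; simpa using hA x
    show {x : κ | {y : κ | (x, y) ∈ {p : κ × κ | p.1 < p.2}} ∈ U} ∈ U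
    rw [this]
    exact Filter.univ_mem
  · intro h
    have : {y : κ | {x : κ | (x, y) ∈ {p : κ × κ | p.1 < p.2}} ∈ U} = ∅ := by
      ext y; simpa using hB y
    rw [Set.mem_setOf_eq, this] at h
    exact Filter.empty_notMem (U : Filter κ) h
  · intro h
    have h1 : {p : κ × κ | p.1 < p.2} ∈
        {M : Set (κ × κ) | {x : κ | {y : κ | (x, y) ∈ M} ∈ U} ∈ U} := by
      have : {x : κ | {y : κ | (x, y) ∈ {p : κ × κ | p.1 < p.2}} ∈ U} = Set.univ := by
        ext x; simpa using hA x
      show {x : κ | {y : κ | (x, y) ∈ {p : κ × κ | p.1 < p.2}} ∈ U} ∈ U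
      rw [this]; exact Filter.univ_mem
    rw [h] at h1
    have : {y : κ | {x : κ | (x, y) ∈ {p : κ × κ | p.1 < p.2}} ∈ U} = ∅ := by
      ext y; simpa using hB y
    rw [Set.mem_setOf_eq, this] at h1
    exact Filter.empty_notMem (U : Filter κ) h1
end

section
/- Let (X_i)_{i∈I} be a family of compact Hausdorff spaces and X = ∏_{i∈I} X_i their product. Then the Baire σ-algebra of X equals the product of the Baire σ-algebras of the X_i, i.e. the smallest σ-algebra on X making all projections Baire-measurable. -/
/-- The Baire σ-algebra of a topological space: the smallest σ-algebra making every
continuous map into `[0,1]` measurable. -/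
def baireSigma (X : Type*) [TopologicalSpace X] : MeasurableSpace X :=
  ⨆ f : C(X, (Set.Icc (0 : ℝ) 1)), MeasurableSpace.comap f (borel (Set.Icc (0 : ℝ) 1))

lemma borel_Icc01 : borel (Set.Icc (0 : ℝ) 1) = Subtype.instMeasurableSpace :=
  (Subtype.borelSpace (Set.Icc (0:ℝ) 1)).measurable_eq.symm

/-- A continuous map into `[0,1]` is Baire measurable. -/
lemma baire_measurable_icc {Y : Type*} [TopologicalSpace Y] (h : C(Y, Set.Icc (0:ℝ) 1)) :
    @Measurable _ _ (baireSigma Y) _ h := by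
  rw [measurable_iff_comap_le, ← borel_Icc01]
  exact le_iSup (fun f : C(Y, Set.Icc (0:ℝ) 1) =>
    MeasurableSpace.comap f (borel (Set.Icc (0:ℝ) 1))) h

/-- A continuous real-valued function on a compact space is Baire measurable. -/
lemma baire_measurable_real {Y : Type*} [TopologicalSpace Y] [CompactSpace Y]
    (g : C(Y, ℝ)) : @Measurable _ _ (baireSigma Y) _ g := by
  set M : ℝ := ‖g‖ + 1 with hMdef
  have hM : 0 < M := by positivity
  have hmem : ∀ y, g y / (2 * M) + 1 / 2 ∈ Set.Icc (0 : ℝ) 1 := by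
    intro y
    have hb : |g y| ≤ ‖g‖ := g.norm_coe_le_norm y
    have h1 : |g y / (2 * M)| ≤ 1 / 2 := by
      rw [abs_div, abs_of_pos (show (0:ℝ) < 2 * M by linarith),
        div_le_iff₀ (show (0:ℝ) < 2 * M by linarith)]
      linarith
    have h2 := abs_le.1 h1
    exact ⟨by linarith [h2.1], by linarith [h2.2]⟩
  set h : C(Y, Set.Icc (0:ℝ) 1) :=
    ⟨fun y => ⟨g y / (2 * M) + 1 / 2, hmem y⟩,
      Continuous.subtype_mk ((g.continuous.div_const _).add continuous_const) _⟩ with hhdef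
  have hmh : @Measurable _ _ (baireSigma Y) _ h := baire_measurable_icc h
  have hcoe : @Measurable _ _ (baireSigma Y) _ (fun y => ((h y : ℝ))) :=
    measurable_subtype_coe.comp hmh
  have hgm : @Measurable _ _ (baireSigma Y) _ (fun y => 2 * M * ((h y : ℝ) - 1 / 2)) :=
    (measurable_const.mul (hcoe.sub measurable_const))
  have heq : (fun y => 2 * M * ((h y : ℝ) - 1 / 2)) = g := by
    funext y
    simp only [hhdef, ContinuousMap.coe_mk]
    field_simp
    ring
  rwa [heq] at hgm

/-- For a product of compact Hausdorff spaces, the Baire σ-algebra of the product equals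
the product of the Baire σ-algebras (the smallest σ-algebra making all projections
Baire-measurable). -/
theorem baire_of_product
    {ι : Type*} (X : ι → Type*) [∀ i, TopologicalSpace (X i)]
    [∀ i, CompactSpace (X i)] [∀ i, T2Space (X i)] :
    baireSigma (∀ i, X i) =
      ⨆ i, MeasurableSpace.comap (fun x => x i) (baireSigma (X i)) := by
  set m : MeasurableSpace (∀ i, X i) :=
    ⨆ i, MeasurableSpace.comap (fun x => x i) (baireSigma (X i)) with hmdef
  apply le_antisymm
  · -- hard direction
    set proj : ∀ i, C(∀ j, X j, X i) := fun i => ⟨fun x => x i, continuous_apply i⟩ with hproj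
    set S : Set C(∀ i, X i, ℝ) :=
      ⋃ i, Set.range (fun g : C(X i, ℝ) => g.comp (proj i)) with hSdef
    set A : Subalgebra ℝ C(∀ i, X i, ℝ) := Algebra.adjoin ℝ S with hAdef
    have hprojm : ∀ i, @Measurable _ _ m (baireSigma (X i)) (fun x : ∀ j, X j => x i) := by
      intro i
      rw [measurable_iff_comap_le]
      exact le_iSup (fun i => MeasurableSpace.comap (fun x : ∀ j, X j => x i)
        (baireSigma (X i))) i
    have hAmeas : ∀ φ ∈ A, @Measurable _ _ m _ φ := by
      intro φ hφ
      induction hφ using Algebra.adjoin_induction with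
      | mem ψ hψ =>
        simp only [hSdef, Set.mem_iUnion, Set.mem_range] at hψ
        obtain ⟨i, g, rfl⟩ := hψ
        exact (baire_measurable_real g).comp (hprojm i)
      | algebraMap r => exact measurable_const
      | add x y hx hy hx' hy' => exact hx'.add hy'
      | mul x y hx hy hx' hy' => exact hx'.mul hy'
    have hsep : A.SeparatesPoints := by
      intro x y hxy
      obtain ⟨i, hi⟩ : ∃ i, x i ≠ y i := by
        by_contra hc
        push_neg at hc
        exact hxy (funext hc)
      obtain ⟨g, hg0, hg1, -⟩ := exists_continuous_zero_one_of_isClosed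
        (isClosed_singleton (x := x i)) (isClosed_singleton (x := y i))
        (Set.disjoint_singleton.2 hi)
      refine ⟨_, ⟨g.comp (proj i), Algebra.subset_adjoin ?_, rfl⟩, ?_⟩
      · exact Set.mem_iUnion.2 ⟨i, ⟨g, rfl⟩⟩
      · have h0 : g (x i) = 0 := hg0 rfl
        have h1 : g (y i) = 1 := hg1 rfl
        simp [hproj, h0, h1]
    have key : ∀ f : C(∀ i, X i, Set.Icc (0:ℝ) 1),
        @Measurable _ _ m (borel (Set.Icc (0:ℝ) 1)) f := by
      intro f
      set fR : C(∀ i, X i, ℝ) :=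
        ⟨fun x => ((f x : ℝ)), continuous_subtype_val.comp f.continuous⟩ with hfRdef
      have hfR : fR ∈ A.topologicalClosure := by
        rw [ContinuousMap.subalgebra_topologicalClosure_eq_top_of_separatesPoints A hsep]
        trivial
      obtain ⟨u, hu_mem, hu_lim⟩ := mem_closure_iff_seq_limit.1 hfR
      have hmeasR : @Measurable _ _ m _ (fun x => ((f x : ℝ))) := by
        apply @measurable_of_tendsto_metrizable _ _ m _ _ _ _
          (fun n => (u n : (∀ i, X i) → ℝ)) _ (fun n => hAmeas _ (hu_mem n))
        rw [tendsto_pi_nhds]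
        intro x
        exact ((continuous_eval_const x).tendsto fR).comp hu_lim
      rw [borel_Icc01]
      exact Measurable.subtype_mk hmeasR
    exact iSup_le fun f => measurable_iff_comap_le.1 (key f)
  · refine iSup_le fun i => ?_
    rw [show baireSigma (X i) = ⨆ g : C(X i, Set.Icc (0:ℝ) 1),
        MeasurableSpace.comap g (borel (Set.Icc (0:ℝ) 1)) from rfl,
      MeasurableSpace.comap_iSup]
    refine iSup_le fun g => ?_
    rw [MeasurableSpace.comap_comp]
    exact le_iSup (fun f : C(∀ i, X i, Set.Icc (0:ℝ) 1) =>
      MeasurableSpace.comap f (borel (Set.Icc (0:ℝ) 1)))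
      (g.comp ⟨fun x => x i, continuous_apply i⟩)
end

section
/- Every Radon probability bimeasure on compact Hausdorff spaces X, Y extends to a Radon probability measure on X × Y: if γ : B(X) × B(Y) → [0,1] is countably additive in each variable, satisfies γ(X,Y) = 1, and is inner regular by compact sets separately in each variable, then there exists a Radon probability measure p on X × Y with p(A × B) = γ(A, B) for all Borel A ⊆ X, B ⊆ Y. -/
/-!
The slices `γ (·, B)` and `γ (A, ·)` are finite inner regular measures, hence also outer regular,
so up to `ε` every Borel rectangle `A ×ˢ B` lies between a compact rectangle and an open one.
Compactness reduces a countable cover of `A ×ˢ B` by rectangles to a finite cover by open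
rectangles, and for finite covers subadditivity follows by induction on the number of rectangles.
Hence the outer measure generated by countable rectangle covers equals `γ` on rectangles and makes
them Carathéodory measurable. Finite unions of open rectangles separate a compact set from a
disjoint closed set, so this outer measure is additive on disjoint compact sets; the measure of the
resulting content extends `γ`, being squeezed between the same compact and open rectangles.
-/

open MeasureTheory Set TopologicalSpace
open scoped ENNReal

namespace MeasureTheory.OuterMeasure

theorem ofFunction_caratheodory_of_le {α : Type*} {m : Set α → ℝ≥0∞} {h₀ : m ∅ = 0}
    {s : Set α} (hs : ∀ t, OuterMeasure.ofFunction m h₀ (t ∩ s) +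
      OuterMeasure.ofFunction m h₀ (t \ s) ≤ m t) :
    MeasurableSet[(OuterMeasure.ofFunction m h₀).caratheodory] s := by
  set μ := OuterMeasure.ofFunction m h₀
  refine (isCaratheodory_iff_le _).2 fun t => ?_
  rw [ofFunction_apply]
  refine le_iInf₂ fun f hf => ?_
  calc μ (t ∩ s) + μ (t \ s) ≤ μ (⋃ i, f i ∩ s) + μ (⋃ i, f i \ s) := by
        rw [← iUnion_inter, ← iUnion_sdiff]
        exact add_le_add (measure_mono (inter_subset_inter_left _ hf))
          (measure_mono (sdiff_subset_sdiff_left hf))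
    _ ≤ ∑' i, μ (f i ∩ s) + ∑' i, μ (f i \ s) :=
        add_le_add (measure_iUnion_le _) (measure_iUnion_le _)
    _ ≤ ∑' i, m (f i) := by
        rw [← ENNReal.tsum_add]
        exact ENNReal.tsum_le_tsum fun i => hs (f i)

end MeasureTheory.OuterMeasure

theorem IsCompact.exists_finset_biUnion_prod_subset {X Y : Type*} [TopologicalSpace X]
    [TopologicalSpace Y] {C W : Set (X × Y)} (hC : IsCompact C) (hW : IsOpen W) (hCW : C ⊆ W) :
    ∃ (s : Finset (X × Y)) (U : X × Y → Set X) (V : X × Y → Set Y),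
      (∀ z ∈ s, IsOpen (U z) ∧ IsOpen (V z)) ∧
      C ⊆ ⋃ z ∈ s, U z ×ˢ V z ∧ ⋃ z ∈ s, U z ×ˢ V z ⊆ W := by
  choose! U V hU hV hzU hzV hUVW using
    fun (z : X × Y) (hz : z ∈ W) => isOpen_prod_iff.1 hW z.1 z.2 hz
  obtain ⟨s, hsC, hCs⟩ := hC.elim_nhds_subcover (fun z => U z ×ˢ V z) fun z hz =>
    prod_mem_nhds ((hU z (hCW hz)).mem_nhds (hzU z (hCW hz)))
      ((hV z (hCW hz)).mem_nhds (hzV z (hCW hz)))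
  exact ⟨s, U, V, fun z hz => ⟨hU z (hCW (hsC z hz)), hV z (hCW (hsC z hz))⟩, hCs,
    iUnion₂_subset fun z hz => hUVW z (hCW (hsC z hz))⟩

namespace MeasureTheory

variable {X Y : Type*} [MeasurableSpace X] [MeasurableSpace Y]

noncomputable def prodInf (γ : Set X → Set Y → ℝ≥0∞) (E : Set (X × Y)) : ℝ≥0∞ :=
  ⨅ (A : Set X) (B : Set Y) (_ : MeasurableSet A) (_ : MeasurableSet B) (_ : E ⊆ A ×ˢ B), γ A B

theorem prodInf_le {γ : Set X → Set Y → ℝ≥0∞} {E : Set (X × Y)} {A : Set X} {B : Set Y}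
    (hA : MeasurableSet A) (hB : MeasurableSet B) (hE : E ⊆ A ×ˢ B) : prodInf γ E ≤ γ A B :=
  iInf₂_le_of_le A B <| iInf₂_le_of_le hA hB <| iInf_le _ hE

variable [TopologicalSpace X] [TopologicalSpace Y]

structure IsRadonBimeasure (γ : Set X → Set Y → ℝ≥0∞) : Prop where
  le_one : ∀ A B, γ A B ≤ 1
  univ_univ : γ univ univ = 1
  iUnion_left : ∀ B : Set Y, MeasurableSet B → ∀ A : ℕ → Set X,
    (∀ n, MeasurableSet (A n)) → Pairwise (Function.onFun Disjoint A) →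
    γ (⋃ n, A n) B = ∑' n, γ (A n) B
  iUnion_right : ∀ A : Set X, MeasurableSet A → ∀ B : ℕ → Set Y,
    (∀ n, MeasurableSet (B n)) → Pairwise (Function.onFun Disjoint B) →
    γ A (⋃ n, B n) = ∑' n, γ A (B n)
  innerRegular_left : ∀ A B, MeasurableSet A → MeasurableSet B →
    γ A B = ⨆ (K : Set X) (_ : IsCompact K ∧ K ⊆ A), γ K B
  innerRegular_right : ∀ A B, MeasurableSet A → MeasurableSet B →
    γ A B = ⨆ (L : Set Y) (_ : IsCompact L ∧ L ⊆ B), γ A L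

namespace IsRadonBimeasure

variable {γ : Set X → Set Y → ℝ≥0∞} (h : IsRadonBimeasure γ) {A A' : Set X} {B B' : Set Y}
include h

theorem swap : IsRadonBimeasure (flip γ) where
  le_one B A := h.le_one A B
  univ_univ := h.univ_univ
  iUnion_left := h.iUnion_right
  iUnion_right := h.iUnion_left
  innerRegular_left B A hB hA := h.innerRegular_right A B hA hB
  innerRegular_right B A hB hA := h.innerRegular_left A B hA hB

theorem ne_top (A : Set X) (B : Set Y) : γ A B ≠ ∞ :=
  ne_top_of_le_ne_top ENNReal.one_ne_top (h.le_one A B)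

theorem empty_left (hB : MeasurableSet B) : γ ∅ B = 0 := by
  by_contra h0
  have := h.iUnion_left B hB (fun _ => ∅) (fun _ => .empty) fun _ _ _ => disjoint_bot_left
  rw [iUnion_empty, ENNReal.tsum_const_eq_top_of_ne_zero h0] at this
  exact h.ne_top _ _ this

theorem empty_right (hA : MeasurableSet A) : γ A ∅ = 0 :=
  h.swap.empty_left hA

noncomputable def leftMeasure (hB : MeasurableSet B) : Measure X :=
  Measure.ofMeasurable (fun A _ => γ A B) (h.empty_left hB) (h.iUnion_left B hB)

theorem leftMeasure_apply (hB : MeasurableSet B) (hA : MeasurableSet A) :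
    h.leftMeasure hB A = γ A B :=
  Measure.ofMeasurable_apply A hA

instance isFiniteMeasure_leftMeasure (hB : MeasurableSet B) :
    IsFiniteMeasure (h.leftMeasure hB) :=
  ⟨by simpa only [h.leftMeasure_apply hB .univ] using (h.le_one univ B).trans_lt ENNReal.one_lt_top⟩

theorem mono_left (hA : MeasurableSet A) (hA' : MeasurableSet A') (hB : MeasurableSet B)
    (hAA' : A ⊆ A') : γ A B ≤ γ A' B := by
  rw [← h.leftMeasure_apply hB hA, ← h.leftMeasure_apply hB hA']
  exact measure_mono hAA'

theorem mono (hA : MeasurableSet A) (hA' : MeasurableSet A') (hB : MeasurableSet B)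
    (hB' : MeasurableSet B') (hAA' : A ⊆ A') (hBB' : B ⊆ B') : γ A B ≤ γ A' B' :=
  (h.mono_left hA hA' hB hAA').trans (h.swap.mono_left hB hB' hA' hBB')

theorem inter_add_diff_left (hA : MeasurableSet A) (hA' : MeasurableSet A')
    (hB : MeasurableSet B) : γ (A ∩ A') B + γ (A \ A') B = γ A B := by
  rw [← h.leftMeasure_apply hB (hA.inter hA'), ← h.leftMeasure_apply hB (hA.diff hA'),
    ← h.leftMeasure_apply hB hA]
  exact measure_inter_add_sdiff A hA'

theorem inter_add_diff_right (hA : MeasurableSet A) (hB : MeasurableSet B)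
    (hB' : MeasurableSet B') : γ A (B ∩ B') + γ A (B \ B') = γ A B :=
  h.swap.inter_add_diff_left hB hB' hA

/-- Intersecting with `A` and `B` makes the bound additive when `A ×ˢ B` is split along `U j`
and `V j`, which is what the induction removing `U j ×ˢ V j` from the cover needs. -/
theorem le_sum_inter_of_prod_subset_biUnion {ι : Type*} {U : ι → Set X} {V : ι → Set Y}
    (hU : ∀ i, MeasurableSet (U i)) (hV : ∀ i, MeasurableSet (V i)) (s : Finset ι)
    (hA : MeasurableSet A) (hB : MeasurableSet B) (hcov : A ×ˢ B ⊆ ⋃ i ∈ s, U i ×ˢ V i) :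
    γ A B ≤ ∑ i ∈ s, γ (A ∩ U i) (B ∩ V i) := by
  classical
  induction s using Finset.induction_on generalizing A B with
  | empty =>
    simp only [Finset.notMem_empty, iUnion_of_empty, iUnion_empty, subset_empty_iff,
      prod_eq_empty_iff] at hcov
    rcases hcov with rfl | rfl
    · simp [h.empty_left hB]
    · simp [h.empty_right hA]
  | insert j s hj ih =>
    rw [Finset.set_biUnion_insert, ← sdiff_subset_iff] at hcov
    have hAB : γ (A ∩ U j) (B \ V j) ≤ ∑ i ∈ s, γ (A ∩ U j ∩ U i) (B \ V j ∩ V i) := by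
      refine ih (hA.inter (hU j)) (hB.diff (hV j)) (Subset.trans ?_ hcov)
      exact fun z hz => ⟨⟨hz.1.1, hz.2.1⟩, fun hz' => hz.2.2 hz'.2⟩
    have hA'B : γ (A \ U j) B ≤ ∑ i ∈ s, γ (A \ U j ∩ U i) (B ∩ V i) := by
      refine ih (hA.diff (hU j)) hB (Subset.trans ?_ hcov)
      exact fun z hz => ⟨⟨hz.1.1, hz.2⟩, fun hz' => hz.1.2 hz'.1⟩
    calc γ A B
        = γ (A ∩ U j) (B ∩ V j) + γ (A ∩ U j) (B \ V j) + γ (A \ U j) B := by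
          rw [h.inter_add_diff_right (hA.inter (hU j)) hB (hV j),
            h.inter_add_diff_left hA (hU j) hB]
      _ ≤ γ (A ∩ U j) (B ∩ V j) + ∑ i ∈ s,
            (γ (A ∩ U i ∩ U j) (B ∩ V i) + γ ((A ∩ U i) \ U j) (B ∩ V i)) := by
          rw [add_assoc, Finset.sum_add_distrib]
          gcongr
          · refine hAB.trans (Finset.sum_le_sum fun i _ => ?_)
            rw [inter_right_comm]
            have hAij := (hA.inter (hU i)).inter (hU j)
            exact h.mono hAij hAij ((hB.diff (hV j)).inter (hV i)) (hB.inter (hV i)) subset_rfl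
              (inter_subset_inter_left _ sdiff_subset)
          · exact hA'B.trans_eq (Finset.sum_congr rfl fun i _ => by rw [sdiff_inter_right_comm])
      _ = ∑ i ∈ insert j s, γ (A ∩ U i) (B ∩ V i) := by
          rw [Finset.sum_insert hj]
          congr 1
          exact Finset.sum_congr rfl fun i _ =>
            h.inter_add_diff_left (hA.inter (hU i)) (hU j) (hB.inter (hV i))

section

variable [T2Space X] [BorelSpace X]

instance innerRegular_leftMeasure (hB : MeasurableSet B) : (h.leftMeasure hB).InnerRegular := by
  refine ⟨fun A hA r hr => ?_⟩
  rw [h.leftMeasure_apply hB hA, h.innerRegular_left A B hA hB] at hr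
  simp only [lt_iSup_iff] at hr
  obtain ⟨K, ⟨hK, hKA⟩, hrK⟩ := hr
  exact ⟨K, hKA, hK, by rwa [h.leftMeasure_apply hB hK.measurableSet]⟩

theorem exists_isCompact_subset_left (hA : MeasurableSet A) (hB : MeasurableSet B) {ε : ℝ≥0∞}
    (hε : ε ≠ 0) : ∃ K ⊆ A, IsCompact K ∧ γ A B ≤ γ K B + ε := by
  obtain ⟨K, hKA, hK, hAK⟩ := hA.exists_isCompact_lt_add (measure_ne_top (h.leftMeasure hB) A) hε
  rw [h.leftMeasure_apply hB hA, h.leftMeasure_apply hB hK.measurableSet] at hAK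
  exact ⟨K, hKA, hK, hAK.le⟩

theorem exists_isOpen_superset_left (hA : MeasurableSet A) (hB : MeasurableSet B) {ε : ℝ≥0∞}
    (hε : ε ≠ 0) : ∃ U ⊇ A, IsOpen U ∧ γ U B ≤ γ A B + ε := by
  obtain ⟨U, hAU, hU, hUA⟩ := A.exists_isOpen_le_add (h.leftMeasure hB) hε
  rw [h.leftMeasure_apply hB hA, h.leftMeasure_apply hB hU.measurableSet] at hUA
  exact ⟨U, hAU, hU, hUA⟩

variable [T2Space Y] [BorelSpace Y]

theorem exists_isCompact_prod_subset (hA : MeasurableSet A) (hB : MeasurableSet B) {ε : ℝ≥0∞}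
    (hε : ε ≠ 0) : ∃ K ⊆ A, ∃ L ⊆ B, IsCompact K ∧ IsCompact L ∧ γ A B ≤ γ K L + ε := by
  have hε₂ : ε / 2 ≠ 0 := (ENNReal.half_pos hε).ne'
  obtain ⟨K, hKA, hK, hAK⟩ := h.exists_isCompact_subset_left hA hB hε₂
  obtain ⟨L, hLB, hL, hKL⟩ := h.swap.exists_isCompact_subset_left hB hK.measurableSet hε₂
  refine ⟨K, hKA, L, hLB, hK, hL, ?_⟩
  calc γ A B ≤ γ K B + ε / 2 := hAK
    _ ≤ γ K L + ε / 2 + ε / 2 := by gcongr; exact hKL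
    _ = γ K L + ε := by rw [add_assoc, ENNReal.add_halves]

theorem exists_isOpen_prod_superset (hA : MeasurableSet A) (hB : MeasurableSet B) {ε : ℝ≥0∞}
    (hε : ε ≠ 0) : ∃ U ⊇ A, ∃ V ⊇ B, IsOpen U ∧ IsOpen V ∧ γ U V ≤ γ A B + ε := by
  have hε₂ : ε / 2 ≠ 0 := (ENNReal.half_pos hε).ne'
  obtain ⟨U, hAU, hU, hUA⟩ := h.exists_isOpen_superset_left hA hB hε₂
  obtain ⟨V, hBV, hV, hUV⟩ := h.swap.exists_isOpen_superset_left hB hU.measurableSet hε₂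
  refine ⟨U, hAU, V, hBV, hU, hV, ?_⟩
  calc γ U V ≤ γ U B + ε / 2 := hUV
    _ ≤ γ A B + ε / 2 + ε / 2 := by gcongr
    _ = γ A B + ε := by rw [add_assoc, ENNReal.add_halves]

theorem le_tsum_of_prod_subset_iUnion {C : ℕ → Set X} {D : ℕ → Set Y}
    (hC : ∀ n, MeasurableSet (C n)) (hD : ∀ n, MeasurableSet (D n)) (hA : MeasurableSet A)
    (hB : MeasurableSet B) (hcov : A ×ˢ B ⊆ ⋃ n, C n ×ˢ D n) :
    γ A B ≤ ∑' n, γ (C n) (D n) := by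
  refine ENNReal.le_of_forall_pos_le_add fun ε hε _ => ?_
  have hε₂ : (ε / 2 : ℝ≥0∞) ≠ 0 := (ENNReal.half_pos (by exact_mod_cast hε.ne')).ne'
  obtain ⟨δ, hδ, hδε⟩ := ENNReal.exists_pos_sum_of_countable' hε₂ ℕ
  obtain ⟨K, hKA, L, hLB, hK, hL, hAK⟩ := h.exists_isCompact_prod_subset hA hB hε₂
  choose U hCU V hDV hU hV hUV using fun n =>
    h.exists_isOpen_prod_superset (hC n) (hD n) (hδ n).ne'
  obtain ⟨s, hs⟩ := (hK.prod hL).elim_finite_subcover (fun n => U n ×ˢ V n)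
    (fun n => (hU n).prod (hV n))
    ((prod_mono hKA hLB).trans (hcov.trans (iUnion_mono fun n => prod_mono (hCU n) (hDV n))))
  calc γ A B ≤ γ K L + ε / 2 := hAK
    _ ≤ ∑ n ∈ s, γ (U n) (V n) + ε / 2 := by
        gcongr
        refine (h.le_sum_inter_of_prod_subset_biUnion (fun n => (hU n).measurableSet)
          (fun n => (hV n).measurableSet) s hK.measurableSet hL.measurableSet hs).trans ?_
        exact Finset.sum_le_sum fun n _ => h.mono (hK.measurableSet.inter (hU n).measurableSet)
          (hU n).measurableSet (hL.measurableSet.inter (hV n).measurableSet) (hV n).measurableSet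
          inter_subset_right inter_subset_right
    _ ≤ ∑' n, (γ (C n) (D n) + δ n) + ε / 2 := by
        gcongr
        exact (ENNReal.sum_le_tsum s).trans (ENNReal.tsum_le_tsum hUV)
    _ ≤ ∑' n, γ (C n) (D n) + ε := by
        rw [ENNReal.tsum_add, add_assoc]
        gcongr
        calc ∑' n, δ n + ε / 2 ≤ ε / 2 + ε / 2 := by gcongr
          _ = ε := ENNReal.add_halves _

end

theorem prodInf_le_one (E : Set (X × Y)) : prodInf γ E ≤ 1 :=
  (prodInf_le .univ .univ (univ_prod_univ.symm ▸ subset_univ E)).trans (h.le_one _ _)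

theorem prodInf_empty : prodInf γ ∅ = 0 :=
  nonpos_iff_eq_zero.1 <| (prodInf_le .empty .empty (empty_subset _)).trans_eq (h.empty_left .empty)

theorem exists_prod_superset_le_prodInf (E : Set (X × Y)) {ε : ℝ≥0∞} (hε : ε ≠ 0) :
    ∃ A B, MeasurableSet A ∧ MeasurableSet B ∧ E ⊆ A ×ˢ B ∧ γ A B ≤ prodInf γ E + ε := by
  have hlt : prodInf γ E < prodInf γ E + ε :=
    ENNReal.lt_add_right (ne_top_of_le_ne_top ENNReal.one_ne_top (h.prodInf_le_one E)) hε
  conv at hlt => lhs; unfold prodInf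
  simp only [iInf_lt_iff] at hlt
  obtain ⟨A, B, hA, hB, hE, hAB⟩ := hlt
  exact ⟨A, B, hA, hB, hE, hAB.le⟩

noncomputable def outerMeasure : OuterMeasure (X × Y) :=
  OuterMeasure.ofFunction (prodInf γ) h.prodInf_empty

theorem outerMeasure_le_prodInf (E : Set (X × Y)) : h.outerMeasure E ≤ prodInf γ E :=
  OuterMeasure.ofFunction_le E

theorem outerMeasure_ne_top (E : Set (X × Y)) : h.outerMeasure E ≠ ∞ :=
  ne_top_of_le_ne_top ENNReal.one_ne_top <| (h.outerMeasure_le_prodInf E).trans (h.prodInf_le_one E)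

section

variable [T2Space X] [BorelSpace X] [T2Space Y] [BorelSpace Y]

theorem outerMeasure_prod (hA : MeasurableSet A) (hB : MeasurableSet B) :
    h.outerMeasure (A ×ˢ B) = γ A B := by
  refine le_antisymm ((h.outerMeasure_le_prodInf _).trans (prodInf_le hA hB subset_rfl)) ?_
  rw [outerMeasure, OuterMeasure.ofFunction_apply]
  refine le_iInf₂ fun t ht => ENNReal.le_of_forall_pos_le_add fun ε hε _ => ?_
  obtain ⟨δ, hδ, hδε⟩ := ENNReal.exists_pos_sum_of_countable'
    (ENNReal.coe_ne_zero.2 hε.ne') ℕ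
  choose C D hC hD htCD hCD using fun n => h.exists_prod_superset_le_prodInf (t n) (hδ n).ne'
  calc γ A B ≤ ∑' n, γ (C n) (D n) :=
        h.le_tsum_of_prod_subset_iUnion hC hD hA hB (ht.trans (iUnion_mono htCD))
    _ ≤ ∑' n, (prodInf γ (t n) + δ n) := ENNReal.tsum_le_tsum hCD
    _ ≤ ∑' n, prodInf γ (t n) + ε := by rw [ENNReal.tsum_add]; gcongr

theorem isCaratheodory_prod (hA : MeasurableSet A) (hB : MeasurableSet B) :
    MeasurableSet[h.outerMeasure.caratheodory] (A ×ˢ B) := by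
  refine OuterMeasure.ofFunction_caratheodory_of_le fun t =>
    le_iInf₂ fun C D => le_iInf₂ fun hC hD => le_iInf fun htCD => ?_
  have hin : t ∩ A ×ˢ B ⊆ (C ∩ A) ×ˢ (D ∩ B) :=
    (inter_subset_inter_left _ htCD).trans_eq prod_inter_prod
  have hout : t \ A ×ˢ B ⊆ (C \ A) ×ˢ D ∪ (C ∩ A) ×ˢ (D \ B) := by
    rintro ⟨x, y⟩ ⟨hxy, hAB⟩
    obtain ⟨hx, hy⟩ := htCD hxy
    by_cases hxA : x ∈ A
    · exact Or.inr ⟨⟨hx, hxA⟩, hy, fun hyB => hAB ⟨hxA, hyB⟩⟩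
    · exact Or.inl ⟨⟨hx, hxA⟩, hy⟩
  calc h.outerMeasure (t ∩ A ×ˢ B) + h.outerMeasure (t \ A ×ˢ B)
      ≤ h.outerMeasure ((C ∩ A) ×ˢ (D ∩ B)) +
          (h.outerMeasure ((C \ A) ×ˢ D) + h.outerMeasure ((C ∩ A) ×ˢ (D \ B))) :=
        add_le_add (measure_mono hin) ((measure_mono hout).trans (measure_union_le _ _))
    _ = γ (C ∩ A) (D ∩ B) + (γ (C \ A) D + γ (C ∩ A) (D \ B)) := by
        rw [h.outerMeasure_prod (hC.inter hA) (hD.inter hB), h.outerMeasure_prod (hC.diff hA) hD,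
          h.outerMeasure_prod (hC.inter hA) (hD.diff hB)]
    _ = γ C D := by
        rw [← h.inter_add_diff_left hC hA hD, ← h.inter_add_diff_right (hC.inter hA) hD hB]
        ring

theorem outerMeasure_union {C₁ C₂ : Set (X × Y)} (hC₁ : IsCompact C₁) (hC₂ : IsClosed C₂)
    (hd : Disjoint C₁ C₂) : h.outerMeasure (C₁ ∪ C₂) = h.outerMeasure C₁ + h.outerMeasure C₂ := by
  refine le_antisymm (measure_union_le _ _) ?_
  obtain ⟨s, U, V, hUV, hC₁s, hsC₂⟩ := hC₁.exists_finset_biUnion_prod_subset hC₂.isOpen_compl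
    (subset_compl_iff_disjoint_right.2 hd)
  have hM : MeasurableSet[h.outerMeasure.caratheodory] (⋃ z ∈ s, U z ×ˢ V z) :=
    .biUnion s.countable_toSet fun z hz =>
      h.isCaratheodory_prod (hUV z hz).1.measurableSet (hUV z hz).2.measurableSet
  rw [(OuterMeasure.isCaratheodory_iff _).1 hM (C₁ ∪ C₂)]
  exact add_le_add (h.outerMeasure.mono (subset_inter subset_union_left hC₁s))
    (h.outerMeasure.mono (subset_sdiff.2 ⟨subset_union_right,
      subset_compl_iff_disjoint_left.1 hsC₂⟩))

noncomputable def content : Content (X × Y) where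
  toFun K := (h.outerMeasure K).toNNReal
  mono' _ _ hK := ENNReal.toNNReal_mono (h.outerMeasure_ne_top _) (h.outerMeasure.mono hK)
  sup_disjoint' K₁ K₂ hd _ hK₂ := by
    rw [Compacts.coe_sup, h.outerMeasure_union K₁.isCompact hK₂ hd,
      ENNReal.toNNReal_add (h.outerMeasure_ne_top _) (h.outerMeasure_ne_top _)]
  sup_le' K₁ K₂ := by
    rw [Compacts.coe_sup, ← ENNReal.toNNReal_add (h.outerMeasure_ne_top _)
      (h.outerMeasure_ne_top _)]
    exact ENNReal.toNNReal_mono (ENNReal.add_ne_top.2 ⟨h.outerMeasure_ne_top _,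
      h.outerMeasure_ne_top _⟩) (measure_union_le _ _)

theorem content_apply (K : Compacts (X × Y)) : h.content K = h.outerMeasure K :=
  ENNReal.coe_toNNReal (h.outerMeasure_ne_top _)

variable [MeasurableSpace (X × Y)] [BorelSpace (X × Y)]

theorem outerMeasure_le_content_measure {K : Set (X × Y)} (hK : IsCompact K) :
    h.outerMeasure K ≤ h.content.measure K := by
  rw [Content.measure_apply _ hK.measurableSet]
  exact (h.content_apply ⟨K, hK⟩).ge.trans (h.content.le_outerMeasure_compacts ⟨K, hK⟩)

theorem content_measure_le_outerMeasure {W : Set (X × Y)} (hW : IsOpen W) :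
    h.content.measure W ≤ h.outerMeasure W := by
  rw [Content.measure_apply _ hW.measurableSet, h.content.outerMeasure_of_isOpen W hW]
  exact iSup₂_le fun K hKW => (h.content_apply K).trans_le (measure_mono hKW)

theorem content_measure_prod (hA : MeasurableSet A) (hB : MeasurableSet B) :
    h.content.measure (A ×ˢ B) = γ A B := by
  refine le_antisymm (ENNReal.le_of_forall_pos_le_add fun ε hε _ => ?_)
    (ENNReal.le_of_forall_pos_le_add fun ε hε _ => ?_)
  · obtain ⟨U, hAU, V, hBV, hU, hV, hUV⟩ :=
      h.exists_isOpen_prod_superset hA hB (ENNReal.coe_ne_zero.2 hε.ne')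
    calc h.content.measure (A ×ˢ B) ≤ h.content.measure (U ×ˢ V) :=
          measure_mono (prod_mono hAU hBV)
      _ ≤ h.outerMeasure (U ×ˢ V) := h.content_measure_le_outerMeasure (hU.prod hV)
      _ = γ U V := h.outerMeasure_prod hU.measurableSet hV.measurableSet
      _ ≤ γ A B + ε := hUV
  · obtain ⟨K, hKA, L, hLB, hK, hL, hKL⟩ :=
      h.exists_isCompact_prod_subset hA hB (ENNReal.coe_ne_zero.2 hε.ne')
    calc γ A B ≤ γ K L + ε := hKL
      _ = h.outerMeasure (K ×ˢ L) + ε := by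
          rw [h.outerMeasure_prod hK.measurableSet hL.measurableSet]
      _ ≤ h.content.measure (A ×ˢ B) + ε := by
          gcongr
          exact (h.outerMeasure_le_content_measure (hK.prod hL)).trans
            (measure_mono (prod_mono hKA hLB))

instance isProbabilityMeasure_content_measure : IsProbabilityMeasure h.content.measure :=
  ⟨by rw [← univ_prod_univ, h.content_measure_prod .univ .univ, h.univ_univ]⟩

end

end IsRadonBimeasure

end MeasureTheory

/-- Every Radon probability bimeasure on compact Hausdorff spaces `X, Y` (countably
additive and inner regular by compact sets separately in each variable, with total mass 1)
extends to a Radon probability measure on the Borel σ-algebra of `X × Y`. -/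
theorem radon_bimeasure_extends
    {X Y : Type*} [TopologicalSpace X] [CompactSpace X] [T2Space X]
    [TopologicalSpace Y] [CompactSpace Y] [T2Space Y]
    (γ : Set X → Set Y → ENNReal)
    -- `γ` is `[0,1]`-valued with `γ(X,Y) = 1`
    (hbound : ∀ A B, γ A B ≤ 1)
    (htotal : γ Set.univ Set.univ = 1)
    -- countably additive in each variable separately, on Borel sets
    (haddLeft : ∀ B : Set Y, MeasurableSet[borel Y] B → ∀ A : ℕ → Set X,
      (∀ n, MeasurableSet[borel X] (A n)) → Pairwise (Function.onFun Disjoint A) →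
      γ (⋃ n, A n) B = ∑' n, γ (A n) B)
    (haddRight : ∀ A : Set X, MeasurableSet[borel X] A → ∀ B : ℕ → Set Y,
      (∀ n, MeasurableSet[borel Y] (B n)) → Pairwise (Function.onFun Disjoint B) →
      γ A (⋃ n, B n) = ∑' n, γ A (B n))
    -- inner regular by compact sets separately in each variable
    (hregLeft : ∀ A B, MeasurableSet[borel X] A → MeasurableSet[borel Y] B →
      γ A B = ⨆ (K : Set X) (_ : IsCompact K ∧ K ⊆ A), γ K B)
    (hregRight : ∀ A B, MeasurableSet[borel X] A → MeasurableSet[borel Y] B →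
      γ A B = ⨆ (L : Set Y) (_ : IsCompact L ∧ L ⊆ B), γ A L) :
    ∃ p : @Measure (X × Y) (borel (X × Y)),
      @IsProbabilityMeasure (X × Y) (borel (X × Y)) p ∧
      @Measure.InnerRegular (X × Y) (borel (X × Y)) _ p ∧
      ∀ (A : Set X) (B : Set Y), MeasurableSet[borel X] A → MeasurableSet[borel Y] B →
        p (A ×ˢ B) = γ A B := by
  borelize X Y (X × Y)
  have h : IsRadonBimeasure γ := ⟨hbound, htotal, haddLeft, haddRight, hregLeft, hregRight⟩
  exact ⟨h.content.measure, inferInstance, inferInstance, fun A B => h.content_measure_prod⟩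
end
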